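/- arXiv:1902.03062 — 8 statements merged into one kernel-verified Lean document; each statement's English description precedes it below -/
import Mathlib

section
/- With $u$ as in the explicit resolvent formula $u(s) = \frac{1}{\gamma(s)}\int_0^s h(y)\exp(-\int_y^s \frac{\lambda}{\gamma(z)}dz)\,dy$ and $h \in L^1(0,m)$ nonnegative with $h \not\equiv 0$, one has $u(x) > 0$ if and only if $x > \inf(\operatorname{supp} h)$; in particular $\operatorname{supp} u = [\inf \operatorname{supp} h,\, m]$. -/
/-!
For `h ≥ 0` the weight `y ↦ exp (-∫_y^x λ/γ)` is continuous and positive on `[0, x]`, so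
`∫_0^x h · weight` and `∫_0^x h` are positive together, and `γ(x)⁻¹ > 0` does not change the sign.
The primitive `F x = ∫_0^x h` is continuous, nondecreasing, zero for `x ≤ 0` and positive at `m`;
hence `{F > 0}` meets `[0, m]` in the half-open interval `(inf {F > 0}, m]`.
-/

open MeasureTheory Set Filter Topology

theorem sInf_setOf_pos_lt_iff {F : ℝ → ℝ} {a b x : ℝ} (hF : ContinuousOn F (Icc a b))
    (hmono : MonotoneOn F (Icc a b)) (hle : ∀ y ≤ a, F y ≤ 0) (hb : 0 < F b)
    (hx : x ∈ Icc a b) : sInf {y | 0 < F y} < x ↔ 0 < F x := by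
  set S := {y | 0 < F y}
  have hSa : S ⊆ Ioi a := fun y hy => not_le.mp fun hya => (hle y hya).not_gt hy
  have hbdd : BddBelow S := ⟨a, fun y hy => (hSa hy).le⟩
  constructor
  · intro hlt
    obtain ⟨t, ht, htx⟩ := exists_lt_of_csInf_lt ⟨b, hb⟩ hlt
    exact ht.trans_le (hmono ⟨(hSa ht).le, htx.le.trans hx.2⟩ hx htx.le)
  · intro hFx
    have hax : a < x := hSa hFx
    have hcont : ContinuousWithinAt F (Ico a x) x :=
      (hF x hx).mono fun y hy => ⟨hy.1, hy.2.le.trans hx.2⟩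
    have hnear : ∀ᶠ y in 𝓝[<] x, 0 < F y ∧ y < x :=
      ((hcont.mono_of_mem_nhdsWithin (Ico_mem_nhdsLT hax)).eventually
        (eventually_gt_nhds hFx)).and self_mem_nhdsWithin
    obtain ⟨y, hy, hyx⟩ := hnear.exists
    exact (csInf_le hbdd hy).trans_lt hyx

section NonnegIntegrand

variable {h : ℝ → ℝ} {a b : ℝ}

theorem monotoneOn_setIntegral_Ioc (hh : IntegrableOn h (Ioc a b))
    (hh0 : 0 ≤ᵐ[volume.restrict (Ioc a b)] h) :
    MonotoneOn (fun x => ∫ y in Ioc a x, h y) (Icc a b) := fun _ _ _ hx hst =>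
  setIntegral_mono_set (hh.mono_set (Ioc_subset_Ioc_right hx.2))
    (ae_restrict_of_ae_restrict_of_subset (Ioc_subset_Ioc_right hx.2) hh0)
    (Ioc_subset_Ioc_right hst).eventuallyLE

theorem setIntegral_mul_pos_iff {w : ℝ → ℝ} (hh : IntegrableOn h (Ioc a b))
    (hh0 : 0 ≤ᵐ[volume.restrict (Ioc a b)] h) (hw : ContinuousOn w (Icc a b))
    (hwpos : ∀ y ∈ Ioc a b, 0 < w y) :
    0 < ∫ y in Ioc a b, h y * w y ↔ 0 < ∫ y in Ioc a b, h y := by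
  obtain ⟨C, hC⟩ := isCompact_Icc.exists_bound_of_continuousOn hw
  have hwm : AEStronglyMeasurable w (volume.restrict (Ioc a b)) :=
    (hw.mono Ioc_subset_Icc_self).aestronglyMeasurable measurableSet_Ioc
  have hint : IntegrableOn (fun y => h y * w y) (Ioc a b) := by
    refine (hh.mul_const C).mono' (hh.aestronglyMeasurable.mul hwm) ?_
    filter_upwards [hh0, ae_restrict_mem measurableSet_Ioc] with y hy0 hy
    rw [norm_mul, Real.norm_of_nonneg hy0]
    exact mul_le_mul_of_nonneg_left (hC y (Ioc_subset_Icc_self hy)) hy0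
  have hnonneg : 0 ≤ᵐ[volume.restrict (Ioc a b)] fun y => h y * w y := by
    filter_upwards [hh0, ae_restrict_mem measurableSet_Ioc] with y hy0 hy
    exact mul_nonneg hy0 (hwpos y hy).le
  have hsupp :
      Function.support (fun y => h y * w y) ∩ Ioc a b = Function.support h ∩ Ioc a b := by
    ext y
    simp only [mem_inter_iff, Function.mem_support, and_congr_left_iff]
    exact fun hy => by simp [(hwpos y hy).ne']
  rw [setIntegral_pos_iff_support_of_nonneg_ae hnonneg hint,
    setIntegral_pos_iff_support_of_nonneg_ae hh0 hh, hsupp]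

end NonnegIntegrand

theorem continuousOn_exp_neg_integral {f : ℝ → ℝ} {a x : ℝ} (hax : a ≤ x)
    (hf : ContinuousOn f (Icc a x)) :
    ContinuousOn (fun y => Real.exp (-∫ z in y..x, f z)) (Icc a x) := by
  rw [← uIcc_of_le hax] at hf ⊢
  exact (intervalIntegral.continuousOn_primitive_interval_left
    (hf.integrableOn_compact isCompact_uIcc)).neg.rexp

theorem stmt6_general (m lam γ0 : ℝ) (hγ0 : 0 < γ0) (γ h u : ℝ → ℝ)
    (hγlip : ∃ L : NNReal, LipschitzOnWith L γ (Set.Icc 0 m))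
    (hγlb : ∀ s ∈ Set.Icc 0 m, γ0 ≤ γ s)
    (hh : IntegrableOn h (Set.Ioc 0 m))
    (hhnonneg : ∀ᵐ y ∂(volume.restrict (Set.Ioc 0 m)), 0 ≤ h y)
    (hhne : ¬ (∀ᵐ y ∂(volume.restrict (Set.Ioc 0 m)), h y = 0))
    (hu : ∀ s, u s = (γ s)⁻¹ *
      ∫ y in Set.Ioc 0 s, h y * Real.exp (-∫ z in y..s, lam / γ z)) :
    ∀ x ∈ Set.Icc 0 m,
      (0 < u x ↔ sInf {x : ℝ | 0 < ∫ y in Set.Ioc 0 x, h y} < x) := by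
  obtain ⟨L, hγlip⟩ := hγlip
  have hγpos : ∀ s ∈ Icc 0 m, 0 < γ s := fun s hs => hγ0.trans_le (hγlb s hs)
  have hrate : ContinuousOn (fun z => lam / γ z) (Icc 0 m) :=
    continuousOn_const.div hγlip.continuousOn fun s hs => (hγpos s hs).ne'
  have hmass : 0 < ∫ y in Ioc 0 m, h y :=
    (integral_nonneg_of_ae hhnonneg).lt_of_ne fun h0 =>
      hhne ((integral_eq_zero_iff_of_nonneg_ae hhnonneg hh).mp h0.symm)
  intro x hx
  have hsub : Ioc 0 x ⊆ Ioc 0 m := Ioc_subset_Ioc_right hx.2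
  rw [hu x, mul_pos_iff_of_pos_left (inv_pos.mpr (hγpos x hx)),
    setIntegral_mul_pos_iff (hh.mono_set hsub) (ae_restrict_of_ae_restrict_of_subset hsub hhnonneg)
      (continuousOn_exp_neg_integral hx.1 (hrate.mono (Icc_subset_Icc_right hx.2)))
      fun _ _ => Real.exp_pos _,
    sInf_setOf_pos_lt_iff
      (intervalIntegral.continuousOn_primitive ((integrableOn_Icc_iff_integrableOn_Ioc).2 hh))
      (monotoneOn_setIntegral_Ioc hh hhnonneg)
      (fun y hy => by rw [Ioc_eq_empty (not_lt.mpr hy), setIntegral_empty]) hmass hx]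

/-- For the explicit resolvent solution
`u(s) = (1/γ(s)) ∫_0^s h(y) exp(-∫_y^s λ/γ(z) dz) dy` with `0 ≤ h ∈ L¹(0,m)`,
`h` not a.e. zero, one has `u(x) > 0` iff `x > inf supp h` (for `x ∈ [0,m]`),
where `inf supp h = sInf {x | ∫_0^x h > 0}`. -/
theorem stmt6 (m lam γ0 : ℝ) (hm : 0 < m) (hγ0 : 0 < γ0) (γ h u : ℝ → ℝ)
    (hγlip : ∃ L : NNReal, LipschitzOnWith L γ (Set.Icc 0 m))
    (hγlb : ∀ s ∈ Set.Icc 0 m, γ0 ≤ γ s)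
    (hh : IntegrableOn h (Set.Ioc 0 m))
    (hhnonneg : ∀ᵐ y ∂(volume.restrict (Set.Ioc 0 m)), 0 ≤ h y)
    (hhne : ¬ (∀ᵐ y ∂(volume.restrict (Set.Ioc 0 m)), h y = 0))
    (hu : ∀ s, u s = (γ s)⁻¹ *
      ∫ y in Set.Ioc 0 s, h y * Real.exp (-∫ z in y..s, lam / γ z)) :
    ∀ x ∈ Set.Icc 0 m,
      (0 < u x ↔ sInf {x : ℝ | 0 < ∫ y in Set.Ioc 0 x, h y} < x) :=
  stmt6_general m lam γ0 hγ0 γ h u hγlip hγlb hh hhnonneg hhne hu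
end

section
/- Let $m < \infty$, $\lambda > 0$, and $u \in W^{1,1}(0,m)$ with $u(0) = 0$ satisfying $\lambda u + (\gamma u)' = h$ for some $h \in L^1(0,m)$, where $\gamma \in W^{1,\infty}(0,m)$ with $\gamma \geq \gamma_0 > 0$. Then $\lambda \|u\|_{L^1(0,m)} \leq \|h\|_{L^1(0,m)}$. -/
/-!
Write `w = γ u`, so that `w' = h - λ u` and, as `γ > 0`, `w` has the sign of `u`. Formally
`|w|' = sign(u) (h - λ u) ≤ |h| - λ |u|`, i.e. `F t = |w t| + λ ∫₀ᵗ |u| - ∫₀ᵗ |h|` is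
nonincreasing, and `F m ≤ F 0 = 0` is the claim. Instead of differentiating `|w|` we bound the
right Dini derivative of `F`: near a point where `u ≠ 0`, `u` keeps its sign `σ`, `|w| = σ w`
and `F` decreases; near a zero of `u` the triangle inequality loses only
`2 λ ∫ₓᶻ |u| = o(z - x)`. The fencing lemma for liminf of slopes then gives monotonicity.
-/

open MeasureTheory Set Filter Topology intervalIntegral

theorem eventually_forall_Icc_nhdsGT {α : Type*} [LinearOrder α] [TopologicalSpace α]
    [OrderTopology α] [NoMaxOrder α] {x : α} {p : α → Prop} (hp : ∀ᶠ y in 𝓝[≥] x, p y) :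
    ∀ᶠ z in 𝓝[>] x, ∀ y ∈ Icc x z, p y := by
  obtain ⟨c, hxc, hc⟩ := mem_nhdsGE_iff_exists_Ico_subset.1 hp
  filter_upwards [Ioo_mem_nhdsGT hxc] with z hz y hy using hc ⟨hy.1, hy.2.trans_lt hz.2⟩

section

variable {a b x z lam σ : ℝ} {γ u h w : ℝ → ℝ}

theorem abs_le_abs_add_integral (hxz : x ≤ z) (hlam : 0 ≤ lam)
    (hh : IntervalIntegrable h volume x z) (hu : IntervalIntegrable u volume x z)
    (hw : w z = w x + ∫ y in x..z, (h y - lam * u y)) :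
    |w z| ≤ |w x| + (∫ y in x..z, |h y|) + lam * ∫ y in x..z, |u y| :=
  calc |w z| ≤ |w x| + |∫ y in x..z, (h y - lam * u y)| := hw ▸ abs_add_le _ _
    _ ≤ |w x| + ∫ y in x..z, (|h y| + lam * |u y|) := by
      gcongr
      refine (abs_integral_le_integral_abs hxz).trans
        (integral_mono_on hxz (hh.sub (hu.const_mul lam)).abs (hh.abs.add (hu.abs.const_mul lam))
          fun y _ => ?_)
      simpa [abs_mul, abs_of_nonneg hlam] using abs_sub (h y) (lam * u y)
    _ = |w x| + (∫ y in x..z, |h y|) + lam * ∫ y in x..z, |u y| := by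
      rw [integral_add hh.abs (hu.abs.const_mul lam), intervalIntegral.integral_const_mul,
        ← add_assoc]

theorem abs_mul_add_integral_le_of_sign (hxz : x ≤ z) (hγ : ∀ y ∈ Icc x z, 0 < γ y)
    (hσ : |σ| ≤ 1) (hsign : ∀ y ∈ Icc x z, σ * u y = |u y|)
    (hh : IntervalIntegrable h volume x z) (hu : IntervalIntegrable u volume x z)
    (hw : γ z * u z = γ x * u x + ∫ y in x..z, (h y - lam * u y)) :
    |γ z * u z| + lam * ∫ y in x..z, |u y| ≤ |γ x * u x| + ∫ y in x..z, |h y| := by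
  have hwz : |γ z * u z| = σ * (γ z * u z) := by
    rw [abs_mul, abs_of_pos (hγ z ⟨hxz, le_rfl⟩), ← hsign z ⟨hxz, le_rfl⟩]
    ring
  have hint : ∫ y in x..z, σ * (h y - lam * u y) =
      (∫ y in x..z, σ * h y) - lam * ∫ y in x..z, |u y| := by
    rw [← intervalIntegral.integral_const_mul,
      ← integral_sub (hh.const_mul σ) (hu.abs.const_mul lam)]
    refine integral_congr fun y hy => ?_
    rw [uIcc_of_le hxz] at hy
    simp only [← hsign y hy]
    ring
  have hσle (t : ℝ) : σ * t ≤ |t| :=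
    (le_abs_self _).trans (by rw [abs_mul]; exact mul_le_of_le_one_left (abs_nonneg t) hσ)
  have hσh : ∫ y in x..z, σ * h y ≤ ∫ y in x..z, |h y| :=
    integral_mono_on hxz (hh.const_mul σ) hh.abs fun y _ => hσle (h y)
  calc |γ z * u z| + lam * ∫ y in x..z, |u y|
      = σ * (γ x * u x) + ∫ y in x..z, σ * h y := by
        rw [hwz, hw, mul_add, ← intervalIntegral.integral_const_mul, hint]
        ring
    _ ≤ |γ x * u x| + ∫ y in x..z, |h y| := add_le_add (hσle _) hσh

theorem eventually_abs_mul_add_integral_le (hlam : 0 ≤ lam) (hγ : ∀ y ∈ Icc a b, 0 < γ y)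
    (hu : ContinuousOn u (Icc a b)) (hh : IntervalIntegrable h volume a b)
    (hw : ∀ x ∈ Icc a b, ∀ z ∈ Icc a b,
      γ z * u z = γ x * u x + ∫ y in x..z, (h y - lam * u y))
    (hx : x ∈ Ico a b) {r : ℝ} (hr : 0 < r) :
    ∀ᶠ z in 𝓝[>] x, |γ z * u z| + lam * ∫ y in x..z, |u y| ≤
      |γ x * u x| + (∫ y in x..z, |h y|) + r * (z - x) := by
  have hxab : x ∈ Icc a b := Ico_subset_Icc_self hx
  have hIcc : Icc a b ∈ 𝓝[≥] x :=
    ordConnected_Icc.mem_nhdsGE hxab ⟨hx.1.trans hx.2.le, le_rfl⟩ hx.2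
  have hux : Tendsto u (𝓝[≥] x) (𝓝 (u x)) := (hu x hxab).mono_of_mem_nhdsWithin hIcc
  have hsub : ∀ z ∈ Icc a b, x ≤ z →
      IntervalIntegrable h volume x z ∧ IntervalIntegrable u volume x z := fun z hz hxz =>
    ⟨hh.mono_set (by
        rw [uIcc_of_le hxz, uIcc_of_le (hz.1.trans hz.2)]; exact Icc_subset_Icc hx.1 hz.2),
      (hu.mono (Icc_subset_Icc hx.1 hz.2)).intervalIntegrable_of_Icc hxz⟩
  rcases eq_or_ne (u x) 0 with hx0 | hx0
  · have hsmall : ∀ᶠ y in 𝓝[≥] x, 2 * lam * |u y| < r := by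
      have h0 : Tendsto (fun y => 2 * lam * |u y|) (𝓝[≥] x) (𝓝 0) := by
        simpa [hx0] using hux.abs.const_mul (2 * lam)
      exact h0.eventually_lt_const hr
    filter_upwards [eventually_forall_Icc_nhdsGT (Filter.inter_mem hIcc hsmall),
      self_mem_nhdsWithin] with z hz (hxz : x < z)
    have hzab : z ∈ Icc a b := (hz z ⟨hxz.le, le_rfl⟩).1
    obtain ⟨hhi, hui⟩ := hsub z hzab hxz.le
    have htri := abs_le_abs_add_integral (w := fun t => γ t * u t) hxz.le hlam hhi hui
      (hw x hxab z hzab)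
    have hbound : ∫ y in x..z, 2 * lam * |u y| ≤ ∫ y in x..z, r :=
      integral_mono_on hxz.le (hui.abs.const_mul _) intervalIntegrable_const
        fun y hy => (hz y hy).2.le
    rw [intervalIntegral.integral_const_mul, intervalIntegral.integral_const,
      smul_eq_mul] at hbound
    linarith
  · set σ : ℝ := ((SignType.sign (u x) : SignType) : ℝ)
    have hsign : ∀ᶠ y in 𝓝[≥] x, σ * u y = |u y| := by
      filter_upwards [(continuousAt_sign_of_ne_zero hx0).tendsto.comp hux
        ((isOpen_discrete {SignType.sign (u x)}).mem_nhds rfl)] with y hy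
      rw [← sign_mul_self, show SignType.sign (u y) = SignType.sign (u x) from hy]
    filter_upwards [eventually_forall_Icc_nhdsGT (Filter.inter_mem hIcc hsign),
      self_mem_nhdsWithin] with z hz (hxz : x < z)
    have hzab : z ∈ Icc a b := (hz z ⟨hxz.le, le_rfl⟩).1
    obtain ⟨hhi, hui⟩ := hsub z hzab hxz.le
    have hest := abs_mul_add_integral_le_of_sign hxz.le (fun y hy => hγ y (hz y hy).1)
      (by simp only [σ]; cases SignType.sign (u x) <;> simp) (fun y hy => (hz y hy).2) hhi hui
      (hw x hxab z hzab)
    linarith [mul_pos hr (sub_pos.2 hxz)]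

theorem abs_mul_add_integral_le (hab : a ≤ b) (hlam : 0 ≤ lam) (hγ : ∀ y ∈ Icc a b, 0 < γ y)
    (hu : ContinuousOn u (Icc a b)) (hh : IntervalIntegrable h volume a b)
    (hw : ∀ t ∈ Icc a b, γ t * u t = γ a * u a + ∫ y in a..t, (h y - lam * u y)) :
    |γ b * u b| + lam * ∫ y in a..b, |u y| ≤ |γ a * u a| + ∫ y in a..b, |h y| := by
  have hsub {f : ℝ → ℝ} (hf : IntervalIntegrable f volume a b) (x : ℝ) (hx : x ∈ Icc a b) :
      IntervalIntegrable f volume a x :=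
    hf.mono_set (by rw [uIcc_of_le hab, uIcc_of_le hx.1]; exact Icc_subset_Icc_right hx.2)
  have hui : IntervalIntegrable u volume a b := hu.intervalIntegrable_of_Icc hab
  have hgi : IntervalIntegrable (fun y => h y - lam * u y) volume a b :=
    hh.sub (hui.const_mul lam)
  have hwxz : ∀ x ∈ Icc a b, ∀ z ∈ Icc a b,
      γ z * u z = γ x * u x + ∫ y in x..z, (h y - lam * u y) := by
    intro x hx z hz
    rw [hw z hz, hw x hx, ← integral_interval_sub_left (hsub hgi z hz) (hsub hgi x hx)]
    ring
  set F : ℝ → ℝ := fun t => |γ t * u t| + lam * (∫ y in a..t, |u y|) - ∫ y in a..t, |h y|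
    with hF
  have hFsub : ∀ x ∈ Icc a b, ∀ z ∈ Icc a b, F z - F x =
      |γ z * u z| + lam * (∫ y in x..z, |u y|) - (|γ x * u x| + ∫ y in x..z, |h y|) := by
    intro x hx z hz
    simp only [hF]
    rw [← integral_interval_sub_left (hsub hui.abs z hz) (hsub hui.abs x hx),
      ← integral_interval_sub_left (hsub hh.abs z hz) (hsub hh.abs x hx)]
    ring
  have hFcont : ContinuousOn F (Icc a b) := by
    have hprim {f : ℝ → ℝ} (hf : IntervalIntegrable f volume a b) :
        ContinuousOn (fun t => ∫ y in a..t, f y) (Icc a b) := by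
      simpa [uIcc_of_le hab] using continuousOn_primitive_interval' hf left_mem_uIcc
    have hwc : ContinuousOn (fun t => γ t * u t) (Icc a b) :=
      (continuousOn_const.add (hprim hgi)).congr hw
    rw [hF]
    exact (hwc.abs.add (continuousOn_const.mul (hprim hui.abs))).sub (hprim hh.abs)
  have hslope : ∀ x ∈ Ico a b, ∀ r, 0 < r → ∃ᶠ z in 𝓝[>] x, slope F x z < r := by
    intro x hx r hr
    refine Eventually.frequently ?_
    filter_upwards [eventually_abs_mul_add_integral_le hlam hγ hu hh hwxz hx (half_pos hr),
      self_mem_nhdsWithin, Ioo_mem_nhdsGT hx.2] with z hz (hxz : x < z) hzb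
    rw [slope_def_field, div_lt_iff₀ (sub_pos.2 hxz),
      hFsub x (Ico_subset_Icc_self hx) z ⟨hx.1.trans hxz.le, hzb.2.le⟩]
    linarith [mul_pos hr (sub_pos.2 hxz)]
  have hFb : F b ≤ F a :=
    image_le_of_liminf_slope_right_le_deriv_boundary hFcont (B := fun _ => F a) le_rfl
      continuousOn_const (fun x _ => hasDerivWithinAt_const x _ _) (by simpa using hslope)
      (right_mem_Icc.2 hab)
  linarith [hFsub a (left_mem_Icc.2 hab) b (right_mem_Icc.2 hab)]

end

theorem stmt8_general (m lam γ0 : ℝ) (hm : 0 < m) (hlam : 0 < lam) (hγ0 : 0 < γ0)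
    (γ u h : ℝ → ℝ)
    (hγlb : ∀ s ∈ Set.Icc 0 m, γ0 ≤ γ s)
    (hucont : ContinuousOn u (Set.Icc 0 m))
    (hh : IntegrableOn h (Set.Ioc 0 m))
    (heq : ∀ s ∈ Set.Icc 0 m, γ s * u s = ∫ y in Set.Ioc 0 s, (h y - lam * u y)) :
    lam * ∫ s in Set.Ioc 0 m, |u s| ≤ ∫ s in Set.Ioc 0 m, |h s| := by
  have hw0 : γ 0 * u 0 = 0 := by simpa using heq 0 ⟨le_rfl, hm.le⟩
  have hw : ∀ t ∈ Icc 0 m, γ t * u t = γ 0 * u 0 + ∫ y in 0..t, (h y - lam * u y) :=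
    fun t ht => by rw [hw0, zero_add, integral_of_le ht.1, heq t ht]
  have key := abs_mul_add_integral_le hm.le hlam.le (fun y hy => hγ0.trans_le (hγlb y hy))
    hucont ((intervalIntegrable_iff_integrableOn_Ioc_of_le hm.le).2 hh) hw
  rw [hw0, abs_zero, zero_add, integral_of_le hm.le, integral_of_le hm.le] at key
  linarith [abs_nonneg (γ m * u m)]

/-- Dissipativity estimate on `(0,m)` with `m < ∞`: if `u ∈ W^{1,1}(0,m)`, `u(0)=0`,
solves `λu + (γu)' = h` (encoded in integrated form `γ(s)u(s) = ∫_0^s (h - λu)`),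
with `λ > 0` and `γ ∈ W^{1,∞}`, `γ ≥ γ₀ > 0`, then `λ‖u‖_{L¹} ≤ ‖h‖_{L¹}`. -/
theorem stmt8 (m lam γ0 : ℝ) (hm : 0 < m) (hlam : 0 < lam) (hγ0 : 0 < γ0)
    (γ u h : ℝ → ℝ)
    (hγlip : ∃ L : NNReal, LipschitzOnWith L γ (Set.Icc 0 m))
    (hγlb : ∀ s ∈ Set.Icc 0 m, γ0 ≤ γ s)
    (hucont : ContinuousOn u (Set.Icc 0 m))
    (hh : IntegrableOn h (Set.Ioc 0 m))
    (heq : ∀ s ∈ Set.Icc 0 m, γ s * u s = ∫ y in Set.Ioc 0 s, (h y - lam * u y)) :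
    lam * ∫ s in Set.Ioc 0 m, |u s| ≤ ∫ s in Set.Ioc 0 m, |h s| :=
  stmt8_general m lam γ0 hm hlam hγ0 γ u h hγlb hucont hh heq
end

section
/- Let $u \in W^{1,1}(0,\infty)$ with $u(0) = 0$ satisfy $\lambda u + (\gamma u)' = h$ with $\lambda > 0$, $h \in L^1(0,\infty)$, $\gamma \in W^{1,\infty}(0,\infty)$, $\gamma \geq \gamma_0 > 0$. Then $\lambda \|u\|_{L^1(0,\infty)} \leq \|h\|_{L^1(0,\infty)}$. -/
/-!
Put `w = γ u`, so that `w t = ∫₀ᵗ (h - λ u)` is absolutely continuous. Then so is `|w|`, and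
`|w|' = sign w · (h - λ u)` almost everywhere: off the zeros of `w` by the chain rule, and at a
zero of `w` because `|w|` has a minimum there. Since `γ > 0`, `sign w = sign u`, hence
`|w T| = ∫₀ᵀ (sign u · h - λ |u|) ≤ ∫₀ᵀ |h| - λ ∫₀ᵀ |u|`.
Dropping `|w T| ≥ 0` and letting `T → ∞` gives the estimate.
-/

open MeasureTheory Set Filter

theorem LipschitzWith.comp_absolutelyContinuousOnInterval {X Y : Type*} [PseudoMetricSpace X]
    [PseudoMetricSpace Y] {φ : X → Y} {K : NNReal} (hφ : LipschitzWith K φ) {f : ℝ → X}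
    {a b : ℝ} (hf : AbsolutelyContinuousOnInterval f a b) :
    AbsolutelyContinuousOnInterval (φ ∘ f) a b := by
  have hK := Tendsto.const_mul (K : ℝ) hf
  rw [mul_zero] at hK
  refine squeeze_zero (fun _ ↦ Finset.sum_nonneg fun _ _ ↦ dist_nonneg) (fun E ↦ ?_) hK
  rw [Finset.mul_sum]
  exact Finset.sum_le_sum fun i _ ↦ hφ.dist_le_mul _ _

theorem abs_intervalIntegral_le_of_sign_mul_le {g φ : ℝ → ℝ} {a b : ℝ} (hab : a ≤ b)
    (hg : IntervalIntegrable g volume a b) (hφ : IntervalIntegrable φ volume a b)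
    (hle : ∀ t ∈ Ioc a b, SignType.sign (∫ x in a..t, g x) * g t ≤ φ t) :
    |∫ x in a..b, g x| ≤ ∫ t in a..b, φ t := by
  set W : ℝ → ℝ := fun t ↦ ∫ x in a..t, g x
  have habsW : AbsolutelyContinuousOnInterval (fun t ↦ |W t|) a b :=
    (lipschitzWith_one_norm (E := ℝ)).comp_absolutelyContinuousOnInterval
      (hg.absolutelyContinuousOnInterval_intervalIntegral left_mem_uIcc)
  have hftc := habsW.integral_deriv_eq_sub
  rw [show W a = 0 from intervalIntegral.integral_same, abs_zero, sub_zero] at hftc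
  rw [← hftc]
  refine intervalIntegral.integral_mono_ae_restrict hab habsW.intervalIntegrable_deriv hφ ?_
  rw [EventuallyLE, ← Measure.restrict_congr_set Ioc_ae_eq_Icc, ae_restrict_iff' measurableSet_Ioc]
  filter_upwards [hg.ae_hasDerivAt_integral] with t hderiv ht
  refine le_trans (le_of_eq ?_) (hle t ht)
  have htI : t ∈ uIcc a b := Ioc_subset_Icc_self ht |> (uIcc_of_le hab).symm.subset
  by_cases hWt : W t = 0
  · have hmin : IsLocalMin (fun s ↦ |W s|) t :=
      Eventually.of_forall fun s ↦ by simp only [hWt, abs_zero]; exact abs_nonneg _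
    change deriv (fun s ↦ |W s|) t = SignType.sign (W t) * g t
    rw [hmin.deriv_eq_zero, hWt, sign_zero, SignType.coe_zero, zero_mul]
  · exact ((hasDerivAt_abs hWt).comp t (hderiv htI a left_mem_uIcc)).deriv

theorem sign_mul_le_abs (u h : ℝ) : (SignType.sign u : ℝ) * h ≤ |h| := by
  rcases lt_trichotomy u 0 with hu | rfl | hu
  · simp [sign_neg hu, neg_le_abs]
  · simp
  · simp [sign_pos hu, le_abs_self]

theorem mul_intervalIntegral_abs_le_of_mul_eq_intervalIntegral {lam a b : ℝ} {γ u h : ℝ → ℝ}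
    (hab : a ≤ b) (hγ : ∀ s ∈ Ioc a b, 0 < γ s) (hu : IntervalIntegrable u volume a b)
    (hh : IntervalIntegrable h volume a b)
    (heq : ∀ s ∈ Ioc a b, γ s * u s = ∫ y in a..s, (h y - lam * u y)) :
    lam * ∫ s in a..b, |u s| ≤ ∫ s in a..b, |h s| := by
  have hsign : ∀ s ∈ Ioc a b, SignType.sign (∫ y in a..s, (h y - lam * u y)) * (h s - lam * u s)
      ≤ |h s| - lam * |u s| := fun s hs ↦ by
    rw [← heq s hs, sign_mul, sign_pos (hγ s hs), one_mul, mul_sub, mul_left_comm, sign_mul_self]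
    exact sub_le_sub_right (sign_mul_le_abs _ _) _
  have key := abs_intervalIntegral_le_of_sign_mul_le hab (hh.sub (hu.const_mul lam))
    (hh.abs.sub (hu.abs.const_mul lam)) hsign
  rw [intervalIntegral.integral_sub hh.abs (hu.abs.const_mul lam),
    intervalIntegral.integral_const_mul] at key
  linarith [abs_nonneg (∫ y in a..b, (h y - lam * u y))]

theorem stmt9_general (lam γ0 : ℝ) (hγ0 : 0 < γ0) (γ u h : ℝ → ℝ)
    (hγlb : ∀ s ∈ Set.Ici (0 : ℝ), γ0 ≤ γ s)
    (huint : IntegrableOn u (Set.Ioi 0))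
    (hh : IntegrableOn h (Set.Ioi 0))
    (heq : ∀ s ∈ Set.Ici (0 : ℝ), γ s * u s = ∫ y in Set.Ioc 0 s, (h y - lam * u y)) :
    lam * ∫ s in Set.Ioi 0, |u s| ≤ ∫ s in Set.Ioi 0, |h s| := by
  have hbound : ∀ T, 0 ≤ T → lam * ∫ s in 0..T, |u s| ≤ ∫ s in 0..T, |h s| := fun T hT ↦
    mul_intervalIntegral_abs_le_of_mul_eq_intervalIntegral hT
      (fun s hs ↦ hγ0.trans_le (hγlb s hs.1.le))
      ((intervalIntegrable_iff_integrableOn_Ioc_of_le hT).2 (huint.mono_set Ioc_subset_Ioi_self))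
      ((intervalIntegrable_iff_integrableOn_Ioc_of_le hT).2 (hh.mono_set Ioc_subset_Ioi_self))
      (fun s hs ↦ by rw [heq s hs.1.le, intervalIntegral.integral_of_le hs.1.le])
  exact le_of_tendsto_of_tendsto
    ((intervalIntegral_tendsto_integral_Ioi 0 huint.abs tendsto_id).const_mul lam)
    (intervalIntegral_tendsto_integral_Ioi 0 hh.abs tendsto_id)
    ((eventually_ge_atTop 0).mono hbound)

/-- Dissipativity estimate on the half-line: if `u ∈ W^{1,1}(0,∞)`, `u(0)=0`, solves
`λu + (γu)' = h` (encoded in integrated form), with `λ > 0`, `h ∈ L¹(0,∞)`,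
`γ ∈ W^{1,∞}(0,∞)`, `γ ≥ γ₀ > 0`, then `λ‖u‖_{L¹(0,∞)} ≤ ‖h‖_{L¹(0,∞)}`. -/
theorem stmt9 (lam γ0 : ℝ) (hlam : 0 < lam) (hγ0 : 0 < γ0) (γ u h : ℝ → ℝ)
    (hγlip : ∃ L : NNReal, LipschitzWith L γ)
    (hγlb : ∀ s ∈ Set.Ici (0 : ℝ), γ0 ≤ γ s)
    (hucont : ContinuousOn u (Set.Ici 0))
    (huint : IntegrableOn u (Set.Ioi 0))
    (hh : IntegrableOn h (Set.Ioi 0))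
    (heq : ∀ s ∈ Set.Ici (0 : ℝ), γ s * u s = ∫ y in Set.Ioc 0 s, (h y - lam * u y)) :
    lam * ∫ s in Set.Ioi 0, |u s| ≤ ∫ s in Set.Ioi 0, |h s| :=
  stmt9_general lam γ0 hγ0 γ u h hγlb huint hh heq
end

section
/- Let $\gamma \in W^{1,\infty}(0,\infty)$ with $0 < \gamma_0 \leq \gamma(s) \leq \|\gamma\|_\infty$ for all $s$. For $\lambda = 0$ and any nonzero nonnegative $h \in L^1(0,\infty)$, the function $u(s) = \frac{1}{\gamma(s)}\int_0^s h(y)\,dy$ does not belong to $L^1(0,\infty)$. Consequently $0$ belongs to the spectrum of the operator $A_0 u = -(\gamma u)'$ with domain $\{u \in W^{1,1}(0,\infty) : u(0)=0\}$, and $s(A_0) = 0$. -/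
/-!
The primitive `H s = ∫_0^s h` tends to `∫ h > 0`, so `H / γ ≥ ∫ h / (2Γ)` for large `s` and is
not integrable; a solution of `γ v = H` would coincide with it.

For `λ > 0`, the equation `γ v = ∫_0^s (g - λ v)` is the integral form of `w' = g - (λ/γ) w`,
`w 0 = 0`, for `w = γ v`. Duhamel's formula `w s = ∫_0^s e^{P y - P s} g y` with `P' = λ/γ ≥ λ/Γ`
solves it, and `|w|` is dominated by the convolution of `|g|` with the integrable kernel
`e^{-λt/Γ}`, so `v = w/γ` is integrable.
-/

open MeasureTheory Set Filter Topology
open scoped Convolution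

theorem not_integrableOn_Ioi_of_eventually_le {f : ℝ → ℝ} {a c : ℝ} (hc : 0 < c)
    (hf : ∀ᶠ x in atTop, c ≤ f x) : ¬ IntegrableOn f (Ioi a) := by
  intro hfi
  obtain ⟨b, hb⟩ := eventually_atTop.1 hf
  have hconst : IntegrableOn (fun _ => c) (Ioi (max a b)) := by
    refine Integrable.mono' (hfi.mono_set (Ioi_subset_Ioi (le_max_left a b)))
      aestronglyMeasurable_const ((ae_restrict_iff' measurableSet_Ioi).2 (.of_forall ?_))
    intro x hx
    rw [Real.norm_of_nonneg hc.le]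
    exact hb x (max_lt_iff.1 hx).2.le
  simp [integrableOn_const_iff, hc.ne'] at hconst

theorem tendsto_setIntegral_Ioc_atTop {h : ℝ → ℝ} {a : ℝ} (hh : IntegrableOn h (Ioi a)) :
    Tendsto (fun s => ∫ y in Ioc a s, h y) atTop (𝓝 (∫ y in Ioi a, h y)) :=
  (intervalIntegral_tendsto_integral_Ioi a hh tendsto_id).congr' <|
    (eventually_ge_atTop a).mono fun _ hs => intervalIntegral.integral_of_le hs

theorem not_integrableOn_inv_mul_setIntegral_Ioc {γ h : ℝ → ℝ} {a Γ : ℝ}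
    (hγpos : ∀ᶠ s in atTop, 0 < γ s) (hγub : ∀ᶠ s in atTop, γ s ≤ Γ)
    (hh : IntegrableOn h (Ioi a)) (hhnonneg : ∀ᵐ y ∂(volume.restrict (Ioi a)), 0 ≤ h y)
    (hhne : ¬ ∀ᵐ y ∂(volume.restrict (Ioi a)), h y = 0) :
    ¬ IntegrableOn (fun s => (γ s)⁻¹ * ∫ y in Ioc a s, h y) (Ioi a) := by
  have hI : 0 < ∫ y in Ioi a, h y :=
    (integral_nonneg_of_ae hhnonneg).lt_of_ne fun h0 =>
      hhne ((integral_eq_zero_iff_of_nonneg_ae hhnonneg hh).1 h0.symm)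
  have hΓ : 0 < Γ := by
    obtain ⟨s, hs, hs'⟩ := (hγpos.and hγub).exists
    exact hs.trans_le hs'
  have hhalf : ∀ᶠ s in atTop, (∫ y in Ioi a, h y) / 2 ≤ ∫ y in Ioc a s, h y :=
    (tendsto_setIntegral_Ioc_atTop hh).eventually (eventually_ge_nhds (half_lt_self hI))
  refine not_integrableOn_Ioi_of_eventually_le (mul_pos (inv_pos.2 hΓ) (half_pos hI)) ?_
  filter_upwards [hγpos, hγub, hhalf] with s hpos hub hs
  exact mul_le_mul (inv_anti₀ hpos hub) hs (half_pos hI).le (inv_pos.2 hpos).le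

theorem setIntegral_Ioc_mul_primitive {f k : ℝ → ℝ} {a b : ℝ}
    (hf : IntegrableOn f (Ioc a b)) (hk : IntegrableOn k (Ioc a b)) :
    ∫ r in Ioc a b, k r * ∫ y in Ioc a r, f y = ∫ y in Ioc a b, f y * ∫ r in y..b, k r := by
  set H : ℝ × ℝ → ℝ := {p : ℝ × ℝ | p.2 ≤ p.1}.indicator fun p => k p.1 * f p.2
  have hH : Integrable H ((volume.restrict (Ioc a b)).prod (volume.restrict (Ioc a b))) :=
    (hk.mul_prod hf).indicator (measurableSet_le measurable_snd measurable_fst)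
  have inner_y : ∀ r ∈ Ioc a b, k r * ∫ y in Ioc a r, f y = ∫ y in Ioc a b, H (r, y) := by
    intro r hr
    have hset : Ioc a r = Ioc a b ∩ Iic r := by rw [Ioc_inter_Iic, min_eq_right hr.2]
    rw [← integral_const_mul, hset, ← setIntegral_indicator measurableSet_Iic]
    rfl
  have inner_r : ∀ y ∈ Ioc a b, f y * ∫ r in y..b, k r = ∫ r in Ioc a b, H (r, y) := by
    intro y hy
    have hset : Icc y b = Ioc a b ∩ Ici y := by
      ext r
      simp only [mem_Icc, mem_inter_iff, mem_Ioc, mem_Ici]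
      constructor
      · exact fun h => ⟨⟨hy.1.trans_le h.1, h.2⟩, h.1⟩
      · exact fun h => ⟨h.2, h.1.2⟩
    rw [intervalIntegral.integral_of_le hy.2, ← integral_Icc_eq_integral_Ioc, mul_comm,
      ← integral_mul_const, hset, ← setIntegral_indicator measurableSet_Ici]
    rfl
  rw [setIntegral_congr_fun measurableSet_Ioc inner_y,
    integral_integral_swap (f := fun r y => H (r, y)) hH,
    setIntegral_congr_fun measurableSet_Ioc inner_r]

theorem integrable_setIntegral_Ioc_exp_mul {g : ℝ → ℝ} {c : ℝ} (hc : 0 < c)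
    (hg : IntegrableOn g (Ioi 0)) :
    Integrable (fun s => ∫ y in Ioc 0 s, Real.exp (-(c * (s - y))) * ‖g y‖) := by
  set k : ℝ → ℝ := (Ici 0).indicator fun t => Real.exp (-(c * t))
  set g₀ : ℝ → ℝ := (Ioi 0).indicator fun y => ‖g y‖
  have hk : Integrable k := by
    rw [integrable_indicator_iff measurableSet_Ici, integrableOn_Ici_iff_integrableOn_Ioi]
    simpa using exp_neg_integrableOn_Ioi 0 hc
  have hg₀ : Integrable g₀ := (integrable_indicator_iff measurableSet_Ioi).2 hg.norm
  have hconv : (fun s => ∫ y in Ioc 0 s, Real.exp (-(c * (s - y))) * ‖g y‖) = g₀ ⋆ k := by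
    ext s
    rw [convolution_def, ← integral_indicator measurableSet_Ioc]
    congr 1
    ext y
    by_cases h0 : 0 < y <;> by_cases hs : y ≤ s <;> simp [g₀, k, indicator, h0, hs, mul_comm]
  rw [hconv]
  exact hg₀.integrable_convolution _ hk

theorem MeasureTheory.IntegrableOn.continuous_mul_Ioc {f g : ℝ → ℝ} {a b : ℝ}
    (hf : Continuous f) (hg : IntegrableOn g (Ioc a b)) :
    IntegrableOn (fun x => f x * g x) (Ioc a b) :=
  hg.continuousOn_mul_of_subset hf.continuousOn isCompact_Icc measurableSet_Ioc Ioc_subset_Icc_self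

noncomputable def duhamel (P g : ℝ → ℝ) (s : ℝ) : ℝ :=
  ∫ y in Ioc 0 s, Real.exp (P y - P s) * g y

section Duhamel

variable {P g : ℝ → ℝ}

theorem duhamel_eq_exp_mul (s : ℝ) :
    duhamel P g s = Real.exp (-P s) * ∫ y in Ioc 0 s, Real.exp (P y) * g y := by
  rw [duhamel, ← integral_const_mul]
  congr 1 with y
  rw [sub_eq_add_neg, Real.exp_add]
  ring

theorem continuousOn_duhamel_Icc (hP : Continuous P) {b : ℝ} (hg : IntegrableOn g (Ioc 0 b)) :
    ContinuousOn (duhamel P g) (Icc 0 b) := by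
  have hint : IntegrableOn (fun y => Real.exp (P y) * g y) (Icc 0 b) := by
    rw [integrableOn_Icc_iff_integrableOn_Ioc]
    exact hg.continuous_mul_Ioc hP.rexp
  simp_rw [funext duhamel_eq_exp_mul]
  exact hP.neg.rexp.continuousOn.mul (intervalIntegral.continuousOn_primitive hint)

theorem continuousOn_duhamel (hP : Continuous P) (hg : IntegrableOn g (Ioi 0)) :
    ContinuousOn (duhamel P g) (Ici 0) := by
  intro x hx
  have hx' : x ∈ Icc 0 (x + 1) := ⟨hx, by linarith⟩
  have hcont := continuousOn_duhamel_Icc hP (hg.mono_set Ioc_subset_Ioi_self) x hx'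
  refine hcont.mono_of_mem_nhdsWithin ?_
  rw [← Ici_inter_Iic]
  exact inter_mem_nhdsWithin _ (Iic_mem_nhds (lt_add_one x))

theorem duhamel_eq_setIntegral {a : ℝ → ℝ} (hP : ∀ t, HasDerivAt P (a t) t) (ha : Continuous a)
    {s : ℝ} (hg : IntegrableOn g (Ioc 0 s)) :
    duhamel P g s = ∫ y in Ioc 0 s, (g y - a y * duhamel P g y) := by
  have hPc : Continuous P := continuous_iff_continuousAt.2 fun t => (hP t).continuousAt
  have hexp : ∀ r, HasDerivAt (fun t => -Real.exp (-P t)) (a r * Real.exp (-P r)) r := fun r =>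
    ((hP r).fun_neg.exp.fun_neg).congr_deriv (by ring)
  have hsub : ∀ y ∈ Ioc 0 s, Real.exp (P y) * g y * ∫ r in y..s, a r * Real.exp (-P r) =
      g y - Real.exp (P y - P s) * g y := by
    intro y _
    rw [intervalIntegral.integral_eq_sub_of_hasDerivAt (fun r _ => hexp r)
      ((ha.mul hPc.neg.rexp).intervalIntegrable y s), sub_eq_add_neg (P y), Real.exp_add,
      Real.exp_neg (P y)]
    field_simp
    ring
  have hw : IntegrableOn (fun y => a y * duhamel P g y) (Ioc 0 s) :=
    (ha.continuousOn.mul (continuousOn_duhamel_Icc hPc hg)).integrableOn_Icc.mono_set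
      Ioc_subset_Icc_self
  have key : ∫ r in Ioc 0 s, a r * duhamel P g r = (∫ y in Ioc 0 s, g y) - duhamel P g s := by
    calc ∫ r in Ioc 0 s, a r * duhamel P g r
        = ∫ r in Ioc 0 s, a r * Real.exp (-P r) * ∫ y in Ioc 0 r, Real.exp (P y) * g y := by
          simp_rw [duhamel_eq_exp_mul, mul_assoc]
      _ = ∫ y in Ioc 0 s, Real.exp (P y) * g y * ∫ r in y..s, a r * Real.exp (-P r) :=
          setIntegral_Ioc_mul_primitive (hg.continuous_mul_Ioc hPc.rexp)
            ((ha.mul hPc.neg.rexp).integrableOn_Icc.mono_set Ioc_subset_Icc_self)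
      _ = ∫ y in Ioc 0 s, (g y - Real.exp (P y - P s) * g y) :=
          setIntegral_congr_fun measurableSet_Ioc hsub
      _ = (∫ y in Ioc 0 s, g y) - duhamel P g s :=
          integral_sub hg (hg.continuous_mul_Ioc (hPc.sub continuous_const).rexp)
  rw [integral_sub hg hw, key, sub_sub_cancel]

theorem norm_duhamel_le {c s : ℝ} (hP : ∀ y, 0 ≤ y → y ≤ s → c * (s - y) ≤ P s - P y)
    (hg : IntegrableOn g (Ioc 0 s)) :
    ‖duhamel P g s‖ ≤ ∫ y in Ioc 0 s, Real.exp (-(c * (s - y))) * ‖g y‖ := by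
  refine norm_integral_le_of_norm_le
    (IntegrableOn.continuous_mul_Ioc (f := fun y => Real.exp (-(c * (s - y)))) (by fun_prop)
      hg.norm) ?_
  refine (ae_restrict_iff' measurableSet_Ioc).2 (.of_forall fun y hy => ?_)
  rw [norm_mul, Real.norm_of_nonneg (Real.exp_pos _).le]
  gcongr
  linarith [hP y hy.1.le hy.2]

end Duhamel

theorem exists_integrableOn_resolvent_solution {φ g : ℝ → ℝ} {κ M lam : ℝ} (hφ : Continuous φ)
    (hκ : 0 < κ) (hφlb : ∀ t ∈ Ici (0 : ℝ), κ ≤ φ t) (hφub : ∀ t ∈ Ici (0 : ℝ), φ t ≤ M)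
    (hlam : 0 < lam) (hg : IntegrableOn g (Ioi 0)) :
    ∃ v : ℝ → ℝ, IntegrableOn v (Ioi 0) ∧ ContinuousOn v (Ici 0) ∧
      ∀ s ∈ Ici (0 : ℝ), v s = φ s * ∫ y in Ioc 0 s, (g y - lam * v y) := by
  set P : ℝ → ℝ := fun t => lam * ∫ u in 0..t, φ u
  have hP : ∀ t, HasDerivAt P (lam * φ t) t := fun t =>
    (hφ.integral_hasStrictDerivAt 0 t).hasDerivAt.const_mul lam
  have hPc : Continuous P := continuous_iff_continuousAt.2 fun t => (hP t).continuousAt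
  have hPgrow : ∀ s y, 0 ≤ y → y ≤ s → lam * κ * (s - y) ≤ P s - P y := by
    intro s y hy hys
    refine (convex_Ici 0).mul_sub_le_image_sub_of_le_deriv hPc.continuousOn
      (fun x _ => (hP x).differentiableAt.differentiableWithinAt) (fun x hx => ?_)
      y hy s (hy.trans hys) hys
    rw [(hP x).deriv]
    exact mul_le_mul_of_nonneg_left (hφlb x (interior_subset hx)) hlam.le
  have hgIoc : ∀ s, IntegrableOn g (Ioc 0 s) := fun s => hg.mono_set Ioc_subset_Ioi_self
  have hvc : ContinuousOn (fun s => φ s * duhamel P g s) (Ici 0) :=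
    hφ.continuousOn.mul (continuousOn_duhamel hPc hg)
  refine ⟨fun s => φ s * duhamel P g s, ?_, hvc, fun s _ => ?_⟩
  · have hbound := (integrable_setIntegral_Ioc_exp_mul (mul_pos hlam hκ) hg).const_mul M
    refine hbound.integrableOn.mono'
      ((hvc.mono Ioi_subset_Ici_self).aestronglyMeasurable measurableSet_Ioi)
      ((ae_restrict_iff' measurableSet_Ioi).2 (.of_forall fun s hs => ?_))
    have hφs : 0 ≤ φ s := hκ.le.trans (hφlb s (Ioi_subset_Ici_self hs))
    rw [norm_mul, Real.norm_of_nonneg hφs]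
    exact mul_le_mul (hφub s (Ioi_subset_Ici_self hs))
      (norm_duhamel_le (fun y hy hys => hPgrow s y hy hys) (hgIoc s)) (norm_nonneg _)
      (hφs.trans (hφub s (Ioi_subset_Ici_self hs)))
  · dsimp only
    rw [duhamel_eq_setIntegral hP (hφ.const_mul lam) (hgIoc s)]
    simp_rw [mul_assoc]

/-- For `γ ∈ W^{1,∞}(0,∞)` with `0 < γ₀ ≤ γ ≤ Γ` and any nonzero nonnegative
`h ∈ L¹(0,∞)`, the function `u(s) = (1/γ(s)) ∫_0^s h` is not in `L¹(0,∞)`;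
consequently `0 ∈ σ(A₀)` for `A₀u = -(γu)'`, `u(0)=0` (the resolvent equation at
`λ = 0` has no `L¹` solution), while the resolvent equation is solvable for every
`λ > 0`, so that `s(A₀) = 0`. -/
theorem stmt10 (γ0 Γ : ℝ) (hγ0 : 0 < γ0) (γ h : ℝ → ℝ)
    (hγlip : ∃ L : NNReal, LipschitzWith L γ)
    (hγlb : ∀ s ∈ Set.Ici (0 : ℝ), γ0 ≤ γ s)
    (hγub : ∀ s ∈ Set.Ici (0 : ℝ), γ s ≤ Γ)
    (hh : IntegrableOn h (Set.Ioi 0))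
    (hhnonneg : ∀ᵐ y ∂(volume.restrict (Set.Ioi 0)), 0 ≤ h y)
    (hhne : ¬ (∀ᵐ y ∂(volume.restrict (Set.Ioi 0)), h y = 0)) :
    (¬ IntegrableOn (fun s => (γ s)⁻¹ * ∫ y in Set.Ioc 0 s, h y) (Set.Ioi 0)) ∧
    (¬ ∃ v : ℝ → ℝ, IntegrableOn v (Set.Ioi 0) ∧ ContinuousOn v (Set.Ici 0) ∧
        ∀ s ∈ Set.Ici (0 : ℝ), γ s * v s = ∫ y in Set.Ioc 0 s, h y) ∧
    (∀ lam : ℝ, 0 < lam → ∀ g : ℝ → ℝ, IntegrableOn g (Set.Ioi 0) →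
      ∃ v : ℝ → ℝ, IntegrableOn v (Set.Ioi 0) ∧ ContinuousOn v (Set.Ici 0) ∧
        ∀ s ∈ Set.Ici (0 : ℝ), γ s * v s = ∫ y in Set.Ioc 0 s, (g y - lam * v y)) := by
  have hγpos : ∀ s ∈ Set.Ici (0 : ℝ), 0 < γ s := fun s hs => hγ0.trans_le (hγlb s hs)
  have hu := not_integrableOn_inv_mul_setIntegral_Ioc (Γ := Γ)
    ((eventually_ge_atTop 0).mono hγpos) ((eventually_ge_atTop 0).mono hγub) hh hhnonneg hhne
  refine ⟨hu, ?_, fun lam hlam g hg => ?_⟩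
  · rintro ⟨v, hv, -, hveq⟩
    refine hu (hv.congr_fun (fun s hs => ?_) measurableSet_Ioi)
    rw [← hveq s (mem_Ici.2 hs.le), inv_mul_cancel_left₀ (hγpos s (mem_Ici.2 hs.le)).ne']
  · obtain ⟨L, hL⟩ := hγlip
    have hΓ : 0 < Γ := (hγpos 0 self_mem_Ici).trans_le (hγub 0 self_mem_Ici)
    -- `max γ0 γ` agrees with `γ` on `[0, ∞)` and is bounded below on all of `ℝ`.
    obtain ⟨v, hv, hvc, hveq⟩ :=
      exists_integrableOn_resolvent_solution (φ := fun t => (max γ0 (γ t))⁻¹)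
      ((continuous_const.max hL.continuous).inv₀ fun t => (hγ0.trans_le (le_max_left _ _)).ne')
      (inv_pos.2 hΓ)
      (fun t ht => by
        rw [max_eq_right (hγlb t ht)]
        exact inv_anti₀ (hγpos t ht) (hγub t ht))
      (fun t _ => inv_anti₀ hγ0 (le_max_left _ _)) hlam hg
    refine ⟨v, hv, hvc, fun s hs => ?_⟩
    rw [hveq s hs, max_eq_right (hγlb s hs), mul_inv_cancel_left₀ (hγpos s hs).ne']
end

section
/- Let $\mu \in L^\infty(0,\infty)$ be nonnegative with $\liminf_{x\to\infty}\mu(x) =: \ell$, let $\gamma \in W^{1,\infty}(0,\infty)$ with $\gamma \geq \gamma_0 > 0$, and let $\varepsilon > 0$, $\lambda := -\ell + \varepsilon$. Then for every $h \in L^1(0,\infty)$ the function $u(s) = \frac{1}{\gamma(s)}\int_0^s h(y)\exp\left(-\int_y^s \frac{\lambda + \mu(z)}{\gamma(z)}\,dz\right)dy$ belongs to $L^1(0,\infty)$. -/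
/-
The solution `u` is a Volterra operator applied to `h`, with kernel
`k(s, y) = γ(s)⁻¹ exp(-∫_y^s g)` for `s ≥ y`, where `g = (λ + μ) / γ`. By Tonelli such an operator
maps `L¹(0, ∞)` to itself as soon as the columns `s ↦ k(s, y)` are integrable uniformly in `y`.
Since `λ + μ ≥ ε / 2` beyond some `R`, there `γ⁻¹ ≤ (2 / ε) g`, and `g exp(-∫_m^s g)` is the
a.e. derivative of the absolutely continuous function `-exp(-∫_m^s g)`, so that its integral over
`[m, T]` is `1 - exp(-∫_m^T g) ≤ 1` (take `m = max y R`). On `[y, m]` the kernel is simply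
bounded, because `g ≥ -|λ| / γ0`.
-/

open MeasureTheory Set Filter

theorem AbsolutelyContinuousOnInterval.comp_lipschitzOnWith {X Y : Type*} [PseudoMetricSpace X]
    [PseudoMetricSpace Y] {f : ℝ → X} {φ : X → Y} {s : Set X} {K : NNReal} {a b : ℝ}
    (hφ : LipschitzOnWith K φ s) (hfs : MapsTo f (uIcc a b) s)
    (hf : AbsolutelyContinuousOnInterval f a b) :
    AbsolutelyContinuousOnInterval (φ ∘ f) a b := by
  have hK := Tendsto.const_mul (K : ℝ) hf
  rw [mul_zero] at hK
  refine squeeze_zero' (Eventually.of_forall fun E => Finset.sum_nonneg fun _ _ => dist_nonneg)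
    ?_ hK
  filter_upwards [mem_inf_of_right (mem_principal_self _)] with E hE
  rw [Finset.mul_sum]
  exact Finset.sum_le_sum fun i hi => hφ.dist_le_mul _ (hfs (hE.1 i hi).1) _ (hfs (hE.1 i hi).2)

theorem intervalIntegral.integral_mul_exp_neg_integral {g : ℝ → ℝ} {a b : ℝ}
    (hg : IntervalIntegrable g volume a b) :
    ∫ s in a..b, g s * Real.exp (-∫ z in a..s, g z) = 1 - Real.exp (-∫ z in a..b, g z) := by
  set G : ℝ → ℝ := fun s => ∫ z in a..s, g z
  have hG : AbsolutelyContinuousOnInterval G a b :=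
    hg.absolutelyContinuousOnInterval_intervalIntegral left_mem_uIcc
  obtain ⟨C, hC⟩ := hG.exists_bound
  obtain ⟨K, hK⟩ : ∃ K, LipschitzOnWith K (fun x => -Real.exp (-x)) (Icc (-C) C) :=
    (Real.contDiff_exp.comp contDiff_neg).neg.contDiffOn.exists_lipschitzOnWith one_ne_zero
      (convex_Icc _ _) isCompact_Icc
  have hΦ := hG.comp_lipschitzOnWith hK fun x hx => abs_le.1 (Real.norm_eq_abs _ ▸ hC x hx)
  have hderiv := hΦ.integral_deriv_eq_sub
  simp only [Function.comp_apply, G, intervalIntegral.integral_same, neg_zero, Real.exp_zero]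
    at hderiv
  rw [show 1 - Real.exp (-∫ z in a..b, g z) = -Real.exp (-∫ z in a..b, g z) - -1 by ring,
    ← hderiv]
  refine intervalIntegral.integral_congr_ae ?_
  filter_upwards [hg.ae_hasDerivAt_integral] with x hx hxab
  have := (((hx (uIoc_subset_uIcc hxab) a left_mem_uIcc).fun_neg.exp).fun_neg).deriv
  simp only [Function.comp_def]
  rw [this]; ring

theorem integrableOn_Ioi_and_integral_le_of_intervalIntegral_le {f : ℝ → ℝ} {a I : ℝ}
    (hfi : ∀ T, IntegrableOn f (Ioc a T)) (hf0 : ∀ x, a < x → 0 ≤ f x)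
    (hI : ∀ᶠ T in atTop, ∫ x in a..T, f x ≤ I) :
    IntegrableOn f (Ioi a) ∧ ∫ x in Ioi a, f x ≤ I := by
  have hnorm : ∀ᶠ T in atTop, ∫ x in a..T, ‖f x‖ ≤ I := by
    filter_upwards [hI, eventually_ge_atTop a] with T hT haT
    refine le_of_eq_of_le (intervalIntegral.integral_congr_ae ?_) hT
    filter_upwards with x hx
    rw [uIoc_of_le haT] at hx
    exact Real.norm_of_nonneg (hf0 x hx.1)
  have hf := integrableOn_Ioi_of_intervalIntegral_norm_bounded I a hfi tendsto_id hnorm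
  exact ⟨hf, le_of_tendsto (intervalIntegral_tendsto_integral_Ioi a hf tendsto_id) hI⟩

theorem integrable_integral_mul_of_integral_norm_le {α β : Type*} [MeasurableSpace α]
    [MeasurableSpace β] {μ : Measure α} {ν : Measure β} [SFinite μ] [SFinite ν]
    {k : α → β → ℝ} {h : β → ℝ} {C : ℝ}
    (hk : AEStronglyMeasurable (Function.uncurry k) (μ.prod ν))
    (hki : ∀ᵐ y ∂ν, Integrable (fun x => k x y) μ) (hkC : ∀ᵐ y ∂ν, ∫ x, ‖k x y‖ ∂μ ≤ C)
    (hh : Integrable h ν) :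
    Integrable (fun x => ∫ y, k x y * h y ∂ν) μ := by
  have hF : AEStronglyMeasurable (fun p : α × β => k p.1 p.2 * h p.2) (μ.prod ν) :=
    hk.mul hh.aestronglyMeasurable.comp_snd
  refine Integrable.integral_prod_left ((integrable_prod_iff' hF).2 ⟨?_, ?_⟩)
  · filter_upwards [hki] with y hy using hy.mul_const (h y)
  · refine (hh.norm.const_mul C).mono' hF.norm.prod_swap.integral_prod_right' ?_
    filter_upwards [hkC] with y hy
    simp only [norm_mul, norm_norm, integral_mul_const]
    rw [Real.norm_of_nonneg (by positivity)]
    gcongr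

theorem integrableOn_Ioi_integral_Ioc_mul {k : ℝ → ℝ → ℝ} {h : ℝ → ℝ} {C : ℝ}
    (hk : Measurable (Function.uncurry k))
    (hki : ∀ y, 0 < y → IntegrableOn (fun s => k s y) (Ioi y))
    (hkC : ∀ y, 0 < y → ∫ s in Ioi y, |k s y| ≤ C) (hh : IntegrableOn h (Ioi 0)) :
    IntegrableOn (fun s => ∫ y in Ioc 0 s, k s y * h y) (Ioi 0) := by
  set K : ℝ → ℝ → ℝ := fun s y => (Ici y).indicator (fun s => k s y) s
  have hKy : ∀ y, 0 < y → ∀ f : ℝ → ℝ,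
      ∫ s in Ioi 0, (Ici y).indicator f s = ∫ s in Ioi y, f s := by
    intro y hy f
    rw [setIntegral_indicator measurableSet_Ici, inter_eq_right.2 (Ici_subset_Ioi.2 hy),
      integral_Ici_eq_integral_Ioi]
  have hK := integrable_integral_mul_of_integral_norm_le (μ := volume.restrict (Ioi 0))
    (k := K) (C := C) ?_ ?_ ?_ hh
  · refine IntegrableOn.congr_fun hK (fun s hs => ?_) measurableSet_Ioi
    simp only [K]
    rw [← Ioi_inter_Iic, ← setIntegral_indicator measurableSet_Iic]
    refine setIntegral_congr_fun measurableSet_Ioi fun y _ => ?_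
    by_cases hys : y ≤ s <;> simp [Set.indicator, hys]
  · have : Function.uncurry K = {p : ℝ × ℝ | p.2 ≤ p.1}.indicator (Function.uncurry k) := by
      ext ⟨s, y⟩; simp [K, Set.indicator]
    rw [this]
    exact (hk.indicator (measurableSet_le measurable_snd measurable_fst)).aestronglyMeasurable
  · filter_upwards [ae_restrict_mem measurableSet_Ioi] with y hy
    exact (((integrableOn_Ici_iff_integrableOn_Ioi (by simp)).2 (hki y hy)).integrable_indicator
      measurableSet_Ici).restrict
  · filter_upwards [ae_restrict_mem measurableSet_Ioi] with y hy
    simp only [K, norm_indicator_eq_indicator_norm, Real.norm_eq_abs]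
    exact (hKy y hy _).trans_le (hkC y hy)

section Kernel

variable {γ g : ℝ → ℝ} {γ0 B δ R : ℝ}

theorem neg_integral_le_mul_sub_of_neg_le (hg : ∀ a b, IntervalIntegrable g volume a b)
    (hgB : ∀ z, -B ≤ g z) {a s : ℝ} (has : a ≤ s) : -∫ z in a..s, g z ≤ B * (s - a) := by
  have := intervalIntegral.integral_mono_on has intervalIntegrable_const (hg a s)
    fun z _ => hgB z
  simp only [intervalIntegral.integral_const, smul_eq_mul] at this
  linarith

theorem integrableOn_Ioi_and_integral_inv_mul_exp_neg_integral_le (hγ : Measurable γ) (hγ0 : 0 < γ0)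
    (hγ0γ : ∀ s, γ0 ≤ γ s) (hg : ∀ a b, IntervalIntegrable g volume a b) (hB : 0 ≤ B)
    (hgB : ∀ z, -B ≤ g z) (hδ : 0 < δ) (hR : 0 ≤ R) (hgR : ∀ z, R ≤ z → δ ≤ γ z * g z)
    {y : ℝ} (hy : 0 ≤ y) :
    IntegrableOn (fun s => (γ s)⁻¹ * Real.exp (-∫ z in y..s, g z)) (Ioi y) ∧
      ∫ s in Ioi y, (γ s)⁻¹ * Real.exp (-∫ z in y..s, g z) ≤
        Real.exp (B * R) * (R / γ0 + δ⁻¹) := by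
  set f : ℝ → ℝ := fun s => (γ s)⁻¹ * Real.exp (-∫ z in y..s, g z) with hf
  have hγpos : ∀ s, 0 < γ s := fun s => hγ0.trans_le (hγ0γ s)
  have hγinv : ∀ s, (γ s)⁻¹ ≤ γ0⁻¹ := fun s => inv_anti₀ hγ0 (hγ0γ s)
  have hf_le : ∀ s, y ≤ s → f s ≤ γ0⁻¹ * Real.exp (B * (s - y)) := fun s hys =>
    mul_le_mul (hγinv s) (Real.exp_le_exp.2 (neg_integral_le_mul_sub_of_neg_le hg hgB hys))
      (Real.exp_pos _).le (inv_nonneg.2 hγ0.le)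
  have hfi : ∀ T, IntegrableOn f (Ioc y T) := fun T =>
    Measure.integrableOn_of_bounded measure_Ioc_lt_top.ne
      (hγ.inv.mul (Real.continuous_exp.comp
        (intervalIntegral.continuous_primitive hg y).neg).measurable).aestronglyMeasurable
      (M := γ0⁻¹ * Real.exp (B * (T - y))) <| by
        filter_upwards [ae_restrict_mem measurableSet_Ioc] with s hs
        rw [Real.norm_of_nonneg (by positivity [hγpos s])]
        exact (hf_le s hs.1.le).trans (by gcongr; exact hs.2)
  have hfii : ∀ a b, y ≤ a → a ≤ b → IntervalIntegrable f volume a b := fun a b hya hab =>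
    (intervalIntegrable_iff_integrableOn_Ioc_of_le hab).2 <|
      (hfi b).mono_set (Ioc_subset_Ioc_left hya)
  refine integrableOn_Ioi_and_integral_le_of_intervalIntegral_le hfi
    (fun s _ => by positivity [hγpos s]) ?_
  set m := max y R
  have hym : y ≤ m := le_max_left _ _
  have hmy : m - y ≤ R := sub_le_iff_le_add.2 (max_le (by linarith) (by linarith))
  filter_upwards [eventually_ge_atTop m] with T hmT
  have near : ∫ s in y..m, f s ≤ R * (γ0⁻¹ * Real.exp (B * R)) :=
    calc ∫ s in y..m, f s ≤ ∫ _ in y..m, γ0⁻¹ * Real.exp (B * R) :=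
          intervalIntegral.integral_mono_on hym (hfii y m le_rfl hym) intervalIntegrable_const
            fun s hs => (hf_le s hs.1).trans <| by gcongr; linarith [hs.2]
      _ = (m - y) * (γ0⁻¹ * Real.exp (B * R)) := by
          rw [intervalIntegral.integral_const, smul_eq_mul]
      _ ≤ R * (γ0⁻¹ * Real.exp (B * R)) := by gcongr
  have far : ∫ s in m..T, f s ≤ Real.exp (B * R) * δ⁻¹ := by
    have hRm : R ≤ m := le_max_right _ _
    have hdecay : IntervalIntegrable (fun s => g s * Real.exp (-∫ z in m..s, g z)) volume m T :=
      (hg m T).mul_continuousOn (Real.continuous_exp.comp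
        (intervalIntegral.continuous_primitive hg m).neg).continuousOn
    calc ∫ s in m..T, f s
        ≤ ∫ s in m..T, Real.exp (B * R) * δ⁻¹ * (g s * Real.exp (-∫ z in m..s, g z)) := by
          refine intervalIntegral.integral_mono_on hmT (hfii m T hym hmT)
            (hdecay.const_mul _) fun s hs => ?_
          have hgs : (γ s)⁻¹ ≤ δ⁻¹ * g s := by
            have := hgR s (hRm.trans hs.1)
            rw [← div_eq_inv_mul, le_div_iff₀ hδ, ← div_eq_inv_mul, div_le_iff₀ (hγpos s)]
            linarith
          have hym' : -∫ z in y..m, g z ≤ B * R :=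
            (neg_integral_le_mul_sub_of_neg_le hg hgB hym).trans (by gcongr)
          calc f s
              = (γ s)⁻¹ * (Real.exp (-∫ z in y..m, g z) * Real.exp (-∫ z in m..s, g z)) := by
                simp only [hf]
                rw [← intervalIntegral.integral_add_adjacent_intervals (hg y m) (hg m s),
                  neg_add, Real.exp_add]
            _ ≤ (δ⁻¹ * g s) * (Real.exp (B * R) * Real.exp (-∫ z in m..s, g z)) := by
                gcongr
                exact (inv_pos.2 (hγpos s)).le.trans hgs
            _ = _ := by ring
      _ = Real.exp (B * R) * δ⁻¹ * (1 - Real.exp (-∫ z in m..T, g z)) := by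
          rw [intervalIntegral.integral_const_mul,
            intervalIntegral.integral_mul_exp_neg_integral (hg m T)]
      _ ≤ Real.exp (B * R) * δ⁻¹ :=
          mul_le_of_le_one_right (by positivity) (by linarith [Real.exp_pos (-∫ z in m..T, g z)])
  rw [← intervalIntegral.integral_add_adjacent_intervals (hfii y m le_rfl hym)
    (hfii m T hym hmT)]
  calc _ ≤ R * (γ0⁻¹ * Real.exp (B * R)) + Real.exp (B * R) * δ⁻¹ := add_le_add near far
    _ = _ := by field_simp

theorem integrableOn_Ioi_inv_mul_integral_Ioc_mul_exp_neg_integral {h : ℝ → ℝ}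
    (hγ : Measurable γ) (hγ0 : 0 < γ0) (hγ0γ : ∀ s, γ0 ≤ γ s)
    (hg : ∀ a b, IntervalIntegrable g volume a b) (hgB : ∀ z, -B ≤ g z) (hδ : 0 < δ) (hgδ : ∀ᶠ z in atTop, δ ≤ γ z * g z)
    (hh : IntegrableOn h (Ioi 0)) :
    IntegrableOn (fun s => (γ s)⁻¹ * ∫ y in Ioc 0 s, h y * Real.exp (-∫ z in y..s, g z))
      (Ioi 0) := by
  obtain ⟨R, hR⟩ := eventually_atTop.1 hgδ
  have hkernel := fun y (hy : 0 < y) =>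
    integrableOn_Ioi_and_integral_inv_mul_exp_neg_integral_le hγ hγ0 hγ0γ hg (le_max_right B 0)
      (fun z => (neg_le_neg (le_max_left B 0)).trans (hgB z)) hδ
      (le_max_right R 0) (fun z hz => hR z ((le_max_left R 0).trans hz)) hy.le
  have hγpos : ∀ s, 0 < γ s := fun s => hγ0.trans_le (hγ0γ s)
  have hk :
      Measurable (Function.uncurry fun s y => (γ s)⁻¹ * Real.exp (-∫ z in y..s, g z)) := by
    have hG := intervalIntegral.continuous_primitive hg 0
    have : (Function.uncurry fun s y => (γ s)⁻¹ * Real.exp (-∫ z in y..s, g z)) =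
        fun p => (γ p.1)⁻¹ * Real.exp (-((∫ z in 0..p.1, g z) - ∫ z in 0..p.2, g z)) := by
      ext ⟨s, y⟩
      simp [intervalIntegral.integral_interval_sub_left (hg 0 s) (hg 0 y)]
    rw [this]
    exact (hγ.comp measurable_fst).inv.mul (by fun_prop : Continuous _).measurable
  refine (integrableOn_Ioi_integral_Ioc_mul hk (fun y hy => (hkernel y hy).1)
    (fun y hy => le_of_eq_of_le ?_ (hkernel y hy).2) hh).congr_fun (fun s _ => ?_)
    measurableSet_Ioi
  · refine setIntegral_congr_fun measurableSet_Ioi fun s _ => abs_of_nonneg ?_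
    positivity [hγpos s]
  · simp only
    rw [← integral_const_mul]
    congr 1 with y
    ring

end Kernel

/-- For `λ = -liminf_{x→∞} μ(x) + ε` with `ε > 0`, and any `h ∈ L¹(0,∞)`, the function
`u(s) = (1/γ(s)) ∫_0^s h(y) exp(-∫_y^s (λ+μ(z))/γ(z) dz) dy` belongs to `L¹(0,∞)`. -/
theorem stmt11 (γ0 ε : ℝ) (hγ0 : 0 < γ0) (hε : 0 < ε) (γ μ h : ℝ → ℝ)
    (hγlip : ∃ L : NNReal, LipschitzWith L γ)
    (hγlb : ∀ s ∈ Set.Ici (0 : ℝ), γ0 ≤ γ s)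
    (hμmeas : Measurable μ) (hμnonneg : ∀ x, 0 ≤ μ x)
    (hμbdd : ∃ M : ℝ, ∀ x, μ x ≤ M)
    (hh : IntegrableOn h (Set.Ioi 0)) :
    IntegrableOn
      (fun s => (γ s)⁻¹ * ∫ y in Set.Ioc 0 s,
        h y * Real.exp (-∫ z in y..s,
          ((-(Filter.liminf μ Filter.atTop) + ε) + μ z) / γ z))
      (Set.Ioi 0) := by
  obtain ⟨L, hL⟩ := hγlip
  obtain ⟨M, hM⟩ := hμbdd
  set l := -(Filter.liminf μ Filter.atTop) + ε
  -- `γ` is bounded below only on `[0, ∞)`, where `max γ0 γ` agrees with it.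
  set γ' : ℝ → ℝ := fun s => max γ0 (γ s)
  set g : ℝ → ℝ := fun z => (l + μ z) / γ' z
  have hγ'pos : ∀ s, 0 < γ' s := fun s => hγ0.trans_le (le_max_left _ _)
  have hγ'γ : ∀ s, 0 ≤ s → γ' s = γ s := fun s hs => max_eq_right (hγlb s hs)
  have hγ' : Measurable γ' := (continuous_const.max hL.continuous).measurable
  have hg : ∀ a b, IntervalIntegrable g volume a b := fun a b =>
    (intervalIntegrable_const (c := (|l| + M) / γ0)).mono_fun'
      ((measurable_const.add hμmeas).div hγ').aestronglyMeasurable <|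
      Eventually.of_forall fun z => by
        simp only [g, Real.norm_eq_abs, abs_div, abs_of_pos (hγ'pos z)]
        have hlμ : |l + μ z| ≤ |l| + M :=
          (abs_add_le _ _).trans (by rw [abs_of_nonneg (hμnonneg z)]; linarith [hM z])
        calc |l + μ z| / γ' z ≤ (|l| + M) / γ' z := by gcongr
          _ ≤ (|l| + M) / γ0 := by
            gcongr
            · exact (abs_nonneg _).trans hlμ
            · exact le_max_left _ _
  have hgB : ∀ z, -(|l| / γ0) ≤ g z := fun z =>
    calc -(|l| / γ0) ≤ -|l| / γ' z := by
          rw [neg_div]; gcongr; exact le_max_left _ _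
      _ ≤ (l + μ z) / γ' z := by gcongr; linarith [neg_abs_le l, hμnonneg z]
  have hgδ : ∀ᶠ z in atTop, ε / 2 ≤ γ' z * g z := by
    have := Filter.eventually_lt_of_lt_liminf (u := μ) (f := atTop)
      (b := Filter.liminf μ atTop - ε / 2) (by linarith)
      (isBoundedUnder_of ⟨0, hμnonneg⟩)
    filter_upwards [this] with z hz
    rw [mul_div_cancel₀ _ (hγ'pos z).ne']
    linarith
  refine (integrableOn_Ioi_inv_mul_integral_Ioc_mul_exp_neg_integral hγ' hγ0
    (fun s => le_max_left _ _) hg hgB (half_pos hε) hgδ hh).congr_fun (fun s hs => ?_)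
    measurableSet_Ioi
  simp only [hγ'γ s hs.le]
  refine congrArg _ (setIntegral_congr_fun measurableSet_Ioc fun y hy => ?_)
  refine congrArg (fun I => h y * Real.exp (-I)) (intervalIntegral.integral_congr fun z hz => ?_)
  rw [uIcc_of_le hy.2] at hz
  simp only [g, hγ'γ z (hy.1.le.trans hz.1)]
end

section
/- Let $\mu \in L^\infty(0,\infty)$ nonnegative with $\limsup_{x\to\infty}\mu(x) =: L$, let $\gamma \in W^{1,\infty}(0,\infty)$ with $0 < \gamma_0 \leq \gamma \leq \|\gamma\|_\infty$, $\varepsilon > 0$, and $\lambda := -L - \varepsilon$. Then there exists a nonzero nonnegative $h \in L^1(0,\infty)$ such that the function $u(s) = \frac{1}{\gamma(s)}\int_0^s h(y)\exp\left(-\int_y^s \frac{\lambda + \mu(z)}{\gamma(z)}\,dz\right)dy$ satisfies $\int_0^\infty u(s)\,ds = \infty$. -/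
open MeasureTheory Set Filter Real

/-!
Choose `R ≥ 0` beyond which `μ < limsup μ + ε`. There the exponent `(λ + μ)/γ` is nonpositive, so
for `h = 𝟙_(R, R+1]` and `s ≥ R + 1` the weight `exp(-∫_y^s (λ + μ)/γ)` is at least `1` on the
support of `h`, whence `u(s) ≥ 1/Γ` on `[R + 1, ∞)`.
-/

theorem le_setIntegral_exp_neg_intervalIntegral {g : ℝ → ℝ} {a b s : ℝ} (hab : a ≤ b)
    (hbs : b ≤ s) (hg : IntegrableOn g (Icc a s)) (hg_nonpos : ∀ z ∈ Icc a s, g z ≤ 0) :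
    b - a ≤ ∫ y in Ioc a b, exp (-∫ z in y..s, g z) := by
  have hcont : ContinuousOn (fun y => exp (-∫ z in y..s, g z)) (Icc a s) := by
    have := intervalIntegral.continuousOn_primitive_interval_left
      (by rwa [uIcc_of_le (hab.trans hbs)] : IntegrableOn g (uIcc a s))
    rw [uIcc_of_le (hab.trans hbs)] at this
    exact this.neg.rexp
  have one_le : ∀ y ∈ Ioc a b, 1 ≤ exp (-∫ z in y..s, g z) := by
    intro y hy
    rw [← intervalIntegral.integral_neg]
    exact one_le_exp (intervalIntegral.integral_nonneg (hy.2.trans hbs) fun z hz =>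
      neg_nonneg.2 (hg_nonpos z ⟨hy.1.le.trans hz.1, hz.2⟩))
  simpa [hab] using setIntegral_ge_of_const_le_real measurableSet_Ioc (measure_Ioc_lt_top (μ := volume)).ne
    one_le (hcont.integrableOn_Icc.mono_set (Ioc_subset_Icc_self.trans (Icc_subset_Icc_right hbs)))

theorem setIntegral_indicator_one_mul_of_subset {X : Type*} [MeasurableSpace X] {μ : Measure X}
    {s t : Set X} (hs : MeasurableSet s) (hst : s ⊆ t) (f : X → ℝ) :
    ∫ x in t, s.indicator 1 x * f x ∂μ = ∫ x in s, f x ∂μ := by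
  simp_rw [← indicator_mul_left, Pi.one_apply, one_mul]
  rw [setIntegral_indicator hs, inter_eq_right.2 hst]

theorem setLIntegral_Ioi_ofReal_eq_top {f : ℝ → ℝ} {a b c : ℝ} (hc : 0 < c)
    (hf : ∀ s, a ≤ s → c ≤ f s) : ∫⁻ s in Ioi b, ENNReal.ofReal (f s) = ⊤ := by
  rw [eq_top_iff]
  calc ⊤ = ∫⁻ _ in Ioi (max a b), ENNReal.ofReal c := by simp [hc]
    _ ≤ ∫⁻ s in Ioi (max a b), ENNReal.ofReal (f s) :=
      setLIntegral_mono' measurableSet_Ioi fun s hs =>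
        ENNReal.ofReal_le_ofReal (hf s ((le_max_left a b).trans hs.le))
    _ ≤ _ := lintegral_mono_set (Ioi_subset_Ioi (le_max_right a b))

theorem integrableOn_div_of_abs_le_of_le {X : Type*} [MeasurableSpace X] {μ : Measure X}
    {f γ : X → ℝ} {s : Set X} {C γ0 : ℝ} (hs : MeasurableSet s) (hμs : μ s ≠ ⊤)
    (hf : Measurable f) (hγ : Measurable γ) (hγ0 : 0 < γ0) (hfC : ∀ x ∈ s, |f x| ≤ C)
    (hγs : ∀ x ∈ s, γ0 ≤ γ x) : IntegrableOn (fun x => f x / γ x) s μ :=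
  Measure.integrableOn_of_bounded (M := C / γ0) hμs (hf.div hγ).aestronglyMeasurable <|
    (ae_restrict_iff' hs).2 <| .of_forall fun x hx => by
      rw [norm_div, Real.norm_eq_abs, Real.norm_eq_abs, abs_of_pos (hγ0.trans_le (hγs x hx))]
      exact div_le_div₀ ((abs_nonneg _).trans (hfC x hx)) (hfC x hx) hγ0 (hγs x hx)

/-- For `λ = -limsup_{x→∞} μ(x) - ε` with `ε > 0`, there is a nonzero nonnegative
`h ∈ L¹(0,∞)` for which
`u(s) = (1/γ(s)) ∫_0^s h(y) exp(-∫_y^s (λ+μ(z))/γ(z) dz) dy` has infinite integral. -/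
theorem stmt12 (γ0 Γ ε : ℝ) (hγ0 : 0 < γ0) (hε : 0 < ε) (γ μ : ℝ → ℝ)
    (hγlip : ∃ L : NNReal, LipschitzWith L γ)
    (hγlb : ∀ s ∈ Set.Ici (0 : ℝ), γ0 ≤ γ s)
    (hγub : ∀ s ∈ Set.Ici (0 : ℝ), γ s ≤ Γ)
    (hμmeas : Measurable μ) (hμnonneg : ∀ x, 0 ≤ μ x)
    (hμbdd : ∃ M : ℝ, ∀ x, μ x ≤ M) :
    ∃ h : ℝ → ℝ, IntegrableOn h (Set.Ioi 0) ∧ (∀ x, 0 ≤ h x) ∧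
      (0 < ∫ x in Set.Ioi 0, h x) ∧
      ∫⁻ s in Set.Ioi 0,
        ENNReal.ofReal ((γ s)⁻¹ * ∫ y in Set.Ioc 0 s,
          h y * Real.exp (-∫ z in y..s,
            ((-(Filter.limsup μ Filter.atTop) - ε) + μ z) / γ z)) = ⊤ := by
  obtain ⟨M, hM⟩ := hμbdd
  obtain ⟨K, hK⟩ := hγlip
  set lam := -limsup μ atTop - ε
  have hμ_ev : ∀ᶠ z in atTop, μ z < limsup μ atTop + ε ∧ 0 ≤ z :=
    (eventually_lt_of_limsup_lt (lt_add_of_pos_right _ hε) (isBoundedUnder_of ⟨M, hM⟩)).and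
      (eventually_ge_atTop 0)
  obtain ⟨R, hR⟩ := eventually_atTop.1 hμ_ev
  have hR0 : 0 ≤ R := (hR R le_rfl).2
  have hγ_pos : ∀ z, R ≤ z → 0 < γ z := fun z hz => hγ0.trans_le (hγlb z (hR0.trans hz))
  have hlam : ∀ z, R ≤ z → lam ≤ lam + μ z ∧ lam + μ z ≤ 0 := fun z hz =>
    ⟨le_add_of_nonneg_right (hμnonneg z), by linarith [(hR z hz).1]⟩
  have hg_int : ∀ s, IntegrableOn (fun z => (lam + μ z) / γ z) (Icc R s) := fun s =>
    integrableOn_div_of_abs_le_of_le measurableSet_Icc measure_Icc_lt_top.ne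
      (measurable_const.add hμmeas) hK.continuous.measurable hγ0
      (fun z hz => abs_le_abs_of_nonpos (hlam z hz.1).2 (hlam z hz.1).1)
      fun z hz => hγlb z (hR0.trans hz.1)
  have hΓ : 0 < Γ := (hγ_pos R le_rfl).trans_le (hγub R hR0)
  refine ⟨(Ioc R (R + 1)).indicator 1, ?_, indicator_nonneg fun _ _ => zero_le_one,
    ?_, setLIntegral_Ioi_ofReal_eq_top (inv_pos.2 hΓ) (a := R + 1) fun s hs => ?_⟩
  · exact ((integrable_indicator_iff measurableSet_Ioc).2
      (integrableOn_const measure_Ioc_lt_top.ne)).integrableOn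
  · rw [setIntegral_indicator measurableSet_Ioc,
      inter_eq_right.2 (Ioc_subset_Ioi_self.trans (Ioi_subset_Ioi hR0))]
    simp
  · have hRs : R ≤ s := by linarith
    rw [setIntegral_indicator_one_mul_of_subset measurableSet_Ioc (Ioc_subset_Ioc hR0 hs)]
    calc Γ⁻¹ = Γ⁻¹ * (R + 1 - R) := by ring
      _ ≤ (γ s)⁻¹ * ∫ y in Ioc R (R + 1), exp (-∫ z in y..s, (lam + μ z) / γ z) :=
        mul_le_mul (inv_anti₀ (hγ_pos s hRs) (hγub s (hR0.trans hRs)))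
          (le_setIntegral_exp_neg_intervalIntegral (by linarith) hs (hg_int s)
            fun z hz => div_nonpos_of_nonpos_of_nonneg (hlam z hz.1).2 (hγ_pos z hz.1).le)
          (by linarith) (inv_pos.2 (hγ_pos s hRs)).le
end

section
/- Let $\gamma_1, \gamma_2 \in W^{1,\infty}(0,\infty)$ with $\gamma_i \geq \gamma_0 > 0$, let $\mu, c_1, c_2 \in L^\infty(0,\infty)$ be nonnegative, and suppose $u_1, u_2 \in W^{1,1}(0,\infty)$ are nonnegative, $u_1(0)=u_2(0)=0$, and satisfy for $\lambda > 0$ and nonnegative $h_1, h_2 \in L^1(0,\infty)$: $(\gamma_1 u_1)' + (\lambda + c_1 + \mu)u_1 - c_2 u_2 = h_1$ and $(\gamma_2 u_2)' + (\lambda + c_2)u_2 - c_1 u_1 = h_2$. Then $\lambda \int_0^\infty (u_1 + u_2) \leq \int_0^\infty (h_1 + h_2)$. -/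
/-
Adding the two equations cancels the coupling terms `c₂u₂` and `c₁u₁`: on `(0, t]`,
`γ₁(t)u₁(t) + γ₂(t)u₂(t) = ∫ (h₁ + h₂) - λ ∫ (u₁ + u₂) - ∫ μu₁`.
The left side and `∫ μu₁` are nonnegative, so `λ ∫₀ᵗ (u₁ + u₂) ≤ ∫₀^∞ (h₁ + h₂)` for every `t`,
and monotone convergence lets `t → ∞`.
-/

open MeasureTheory

open Set

theorem MeasureTheory.Integrable.bdd_mul_of_nonneg {α : Type*} [MeasurableSpace α] {ν : Measure α}
    {c u : α → ℝ} (hc : Measurable c) (hc0 : ∀ x, 0 ≤ c x) (hcM : ∃ M, ∀ x, c x ≤ M)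
    (hu : Integrable u ν) : Integrable (fun x => c x * u x) ν := by
  obtain ⟨M, hM⟩ := hcM
  refine hu.bdd_mul (c := M) hc.aestronglyMeasurable (ae_of_all _ fun x => ?_)
  rw [Real.norm_of_nonneg (hc0 x)]
  exact hM x

theorem ofReal_mul_setLIntegral_Ioi_le {f : ℝ → ℝ} {a b C : ℝ} (ha : 0 ≤ a)
    (hf0 : ∀ x ∈ Ioi b, 0 ≤ f x) (hf : ∀ t, IntegrableOn f (Ioc b t))
    (hC : ∀ t, b ≤ t → a * ∫ x in Ioc b t, f x ≤ C) :
    ENNReal.ofReal a * ∫⁻ x in Ioi b, ENNReal.ofReal (f x) ≤ ENNReal.ofReal C := by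
  have hcover : Ioi b = ⋃ n : ℕ, Ioc b (b + n) := by
    ext x
    simp only [mem_Ioi, mem_iUnion, mem_Ioc]
    refine ⟨fun hx => ?_, fun ⟨_, hx, _⟩ => hx⟩
    obtain ⟨n, hn⟩ := exists_nat_ge (x - b)
    exact ⟨n, hx, by linarith⟩
  have hmono : Monotone fun n : ℕ => Ioc b (b + n) := fun m n hmn =>
    Ioc_subset_Ioc_right (by gcongr)
  rw [hcover, setLIntegral_iUnion_of_directed _ hmono.directed_le, ENNReal.mul_iSup]
  refine iSup_le fun n => ?_
  rw [← ofReal_integral_eq_lintegral_ofReal (hf _)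
      (ae_restrict_of_forall_mem measurableSet_Ioc fun x hx => hf0 x hx.1),
    ← ENNReal.ofReal_mul ha]
  exact ENNReal.ofReal_le_ofReal (hC _ (le_add_of_nonneg_right n.cast_nonneg))

section CoupledTransport

variable {α : Type*} [MeasurableSpace α] {ν : Measure α} {lam : ℝ} {μ c1 c2 u1 u2 h1 h2 : α → ℝ}

theorem integral_coupled_add_eq (hh1 : Integrable h1 ν) (hh2 : Integrable h2 ν)
    (hu1 : Integrable u1 ν) (hu2 : Integrable u2 ν) (hc1u1 : Integrable (fun x => c1 x * u1 x) ν)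
    (hc2u2 : Integrable (fun x => c2 x * u2 x) ν) (hμu1 : Integrable (fun x => μ x * u1 x) ν) :
    (∫ x, (h1 x - (lam + c1 x + μ x) * u1 x + c2 x * u2 x) ∂ν)
        + ∫ x, (h2 x - (lam + c2 x) * u2 x + c1 x * u1 x) ∂ν
      = (∫ x, (h1 x + h2 x) ∂ν) - lam * (∫ x, (u1 x + u2 x) ∂ν) - ∫ x, μ x * u1 x ∂ν := by
  have hA : Integrable (fun x => h1 x - (lam + c1 x + μ x) * u1 x + c2 x * u2 x) ν := by
    refine ((hh1.sub (((hu1.const_mul lam).add hc1u1).add hμu1)).add hc2u2).congr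
      (ae_of_all _ fun x => ?_)
    simp only [Pi.add_apply, Pi.sub_apply]
    ring
  have hB : Integrable (fun x => h2 x - (lam + c2 x) * u2 x + c1 x * u1 x) ν := by
    refine ((hh2.sub ((hu2.const_mul lam).add hc2u2)).add hc1u1).congr (ae_of_all _ fun x => ?_)
    simp only [Pi.add_apply, Pi.sub_apply]
    ring
  rw [← integral_add hA hB, ← integral_const_mul, ← integral_sub, ← integral_sub]
  · exact integral_congr_ae (ae_of_all _ fun x => by ring)
  all_goals fun_prop

theorem mul_integral_add_le_of_coupled (hh1 : Integrable h1 ν) (hh2 : Integrable h2 ν)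
    (hu1 : Integrable u1 ν) (hu2 : Integrable u2 ν) (hc1u1 : Integrable (fun x => c1 x * u1 x) ν)
    (hc2u2 : Integrable (fun x => c2 x * u2 x) ν) (hμu1 : Integrable (fun x => μ x * u1 x) ν)
    (hμu1_nonneg : 0 ≤ᵐ[ν] fun x => μ x * u1 x)
    (hsum_nonneg : 0 ≤ (∫ x, (h1 x - (lam + c1 x + μ x) * u1 x + c2 x * u2 x) ∂ν)
        + ∫ x, (h2 x - (lam + c2 x) * u2 x + c1 x * u1 x) ∂ν) :
    lam * ∫ x, (u1 x + u2 x) ∂ν ≤ ∫ x, (h1 x + h2 x) ∂ν := by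
  rw [integral_coupled_add_eq hh1 hh2 hu1 hu2 hc1u1 hc2u2 hμu1] at hsum_nonneg
  linarith [integral_nonneg_of_ae hμu1_nonneg]

end CoupledTransport

theorem stmt16_general (γ0 lam : ℝ) (hγ0 : 0 < γ0) (hlam : 0 < lam)
    (γ1 γ2 μ c1 c2 u1 u2 h1 h2 : ℝ → ℝ)
    (hγ1lb : ∀ s ∈ Set.Ici (0 : ℝ), γ0 ≤ γ1 s)
    (hγ2lb : ∀ s ∈ Set.Ici (0 : ℝ), γ0 ≤ γ2 s)
    (hμmeas : Measurable μ) (hμnonneg : ∀ x, 0 ≤ μ x) (hμbdd : ∃ M, ∀ x, μ x ≤ M)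
    (hc1meas : Measurable c1) (hc1nonneg : ∀ x, 0 ≤ c1 x) (hc1bdd : ∃ M, ∀ x, c1 x ≤ M)
    (hc2meas : Measurable c2) (hc2nonneg : ∀ x, 0 ≤ c2 x) (hc2bdd : ∃ M, ∀ x, c2 x ≤ M)
    (hu1cont : ContinuousOn u1 (Set.Ici 0)) (hu2cont : ContinuousOn u2 (Set.Ici 0))
    (hu1nonneg : ∀ s, 0 ≤ u1 s) (hu2nonneg : ∀ s, 0 ≤ u2 s)
    (hh1 : IntegrableOn h1 (Set.Ioi 0)) (hh2 : IntegrableOn h2 (Set.Ioi 0))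
    (hh1nonneg : ∀ s, 0 ≤ h1 s) (hh2nonneg : ∀ s, 0 ≤ h2 s)
    (heq1 : ∀ s ∈ Set.Ici (0 : ℝ), γ1 s * u1 s =
      ∫ y in Set.Ioc 0 s, (h1 y - (lam + c1 y + μ y) * u1 y + c2 y * u2 y))
    (heq2 : ∀ s ∈ Set.Ici (0 : ℝ), γ2 s * u2 s =
      ∫ y in Set.Ioc 0 s, (h2 y - (lam + c2 y) * u2 y + c1 y * u1 y)) :
    ENNReal.ofReal lam * ∫⁻ s in Set.Ioi 0, ENNReal.ofReal (u1 s + u2 s)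
      ≤ ENNReal.ofReal (∫ s in Set.Ioi 0, (h1 s + h2 s)) := by
  have hloc : ∀ u : ℝ → ℝ, ContinuousOn u (Ici 0) → ∀ t, IntegrableOn u (Ioc 0 t) :=
    fun u hu t => (hu.mono Icc_subset_Ici_self).integrableOn_Icc.mono_set Ioc_subset_Icc_self
  have hu1 := hloc u1 hu1cont
  have hu2 := hloc u2 hu2cont
  refine ofReal_mul_setLIntegral_Ioi_le hlam.le
    (fun x _ => add_nonneg (hu1nonneg x) (hu2nonneg x)) (fun t => (hu1 t).add (hu2 t))
    fun t ht => ?_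
  have hsum_nonneg : 0 ≤ (∫ y in Ioc 0 t, (h1 y - (lam + c1 y + μ y) * u1 y + c2 y * u2 y))
      + ∫ y in Ioc 0 t, (h2 y - (lam + c2 y) * u2 y + c1 y * u1 y) := by
    rw [← heq1 t ht, ← heq2 t ht]
    exact add_nonneg (mul_nonneg (hγ0.le.trans (hγ1lb t ht)) (hu1nonneg t))
      (mul_nonneg (hγ0.le.trans (hγ2lb t ht)) (hu2nonneg t))
  calc lam * ∫ y in Ioc 0 t, (u1 y + u2 y)
      ≤ ∫ y in Ioc 0 t, (h1 y + h2 y) :=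
        mul_integral_add_le_of_coupled (hh1.mono_set Ioc_subset_Ioi_self)
          (hh2.mono_set Ioc_subset_Ioi_self) (hu1 t) (hu2 t)
          ((hu1 t).bdd_mul_of_nonneg hc1meas hc1nonneg hc1bdd)
          ((hu2 t).bdd_mul_of_nonneg hc2meas hc2nonneg hc2bdd)
          ((hu1 t).bdd_mul_of_nonneg hμmeas hμnonneg hμbdd)
          (ae_of_all _ fun y => mul_nonneg (hμnonneg y) (hu1nonneg y)) hsum_nonneg
    _ ≤ ∫ y in Ioi 0, (h1 y + h2 y) :=
        setIntegral_mono_set (hh1.add hh2)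
          (ae_of_all _ fun y => add_nonneg (hh1nonneg y) (hh2nonneg y))
          Ioc_subset_Ioi_self.eventuallyLE

/-- For the coupled system `(γ₁u₁)' + (λ+c₁+μ)u₁ - c₂u₂ = h₁`,
`(γ₂u₂)' + (λ+c₂)u₂ - c₁u₁ = h₂` on `(0,∞)` with `u₁(0)=u₂(0)=0` (encoded in
integrated form), nonnegative data and `λ > 0`, one has
`λ ∫₀^∞ (u₁+u₂) ≤ ∫₀^∞ (h₁+h₂)`. -/
theorem stmt16 (γ0 lam : ℝ) (hγ0 : 0 < γ0) (hlam : 0 < lam)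
    (γ1 γ2 μ c1 c2 u1 u2 h1 h2 : ℝ → ℝ)
    (hγ1lip : ∃ L : NNReal, LipschitzWith L γ1)
    (hγ2lip : ∃ L : NNReal, LipschitzWith L γ2)
    (hγ1lb : ∀ s ∈ Set.Ici (0 : ℝ), γ0 ≤ γ1 s)
    (hγ2lb : ∀ s ∈ Set.Ici (0 : ℝ), γ0 ≤ γ2 s)
    (hμmeas : Measurable μ) (hμnonneg : ∀ x, 0 ≤ μ x) (hμbdd : ∃ M, ∀ x, μ x ≤ M)
    (hc1meas : Measurable c1) (hc1nonneg : ∀ x, 0 ≤ c1 x) (hc1bdd : ∃ M, ∀ x, c1 x ≤ M)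
    (hc2meas : Measurable c2) (hc2nonneg : ∀ x, 0 ≤ c2 x) (hc2bdd : ∃ M, ∀ x, c2 x ≤ M)
    (hu1cont : ContinuousOn u1 (Set.Ici 0)) (hu2cont : ContinuousOn u2 (Set.Ici 0))
    (hu1nonneg : ∀ s, 0 ≤ u1 s) (hu2nonneg : ∀ s, 0 ≤ u2 s)
    (hh1 : IntegrableOn h1 (Set.Ioi 0)) (hh2 : IntegrableOn h2 (Set.Ioi 0))
    (hh1nonneg : ∀ s, 0 ≤ h1 s) (hh2nonneg : ∀ s, 0 ≤ h2 s)
    (heq1 : ∀ s ∈ Set.Ici (0 : ℝ), γ1 s * u1 s =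
      ∫ y in Set.Ioc 0 s, (h1 y - (lam + c1 y + μ y) * u1 y + c2 y * u2 y))
    (heq2 : ∀ s ∈ Set.Ici (0 : ℝ), γ2 s * u2 s =
      ∫ y in Set.Ioc 0 s, (h2 y - (lam + c2 y) * u2 y + c1 y * u1 y)) :
    ENNReal.ofReal lam * ∫⁻ s in Set.Ioi 0, ENNReal.ofReal (u1 s + u2 s)
      ≤ ENNReal.ofReal (∫ s in Set.Ioi 0, (h1 s + h2 s)) :=
  stmt16_general γ0 lam hγ0 hlam γ1 γ2 μ c1 c2 u1 u2 h1 h2 hγ1lb hγ2lb hμmeas hμnonneg hμbdd hc1meas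
    hc1nonneg hc1bdd hc2meas hc2nonneg hc2bdd hu1cont hu2cont hu1nonneg hu2nonneg hh1 hh2 hh1nonneg
    hh2nonneg heq1 heq2
end

section
/- Under the same coupled system with $\lambda = 0$: $(\gamma_1 u_1)' + (c_1+\mu)u_1 - c_2 u_2 = h_1$, $(\gamma_2 u_2)' + c_2 u_2 - c_1 u_1 = h_2$, with $u_1, u_2 \geq 0$, $u_1(0)=u_2(0)=0$, one has $\int_0^\infty \mu(s) u_1(s)\,ds \leq \|h_1\|_{L^1} + \|h_2\|_{L^1}$. If moreover $\liminf_{x\to\infty}\mu(x) > 0$, then $u_1 \in L^1(0,\infty)$. -/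
/-!
Adding the two equations cancels the exchange terms `c₁u₁` and `c₂u₂`:
`γ₁(s)u₁(s) + γ₂(s)u₂(s) = ∫₀ˢ (h₁ + h₂) - ∫₀ˢ μu₁`. The left side is nonnegative, so
`∫₀ˢ μu₁ ≤ ‖h₁‖₁ + ‖h₂‖₁` uniformly in `s`, and `μu₁` is integrable on `(0, ∞)`. If
`liminf μ > 0`, then `μ ≥ ε` beyond some `η`, so `u₁ ≤ ε⁻¹ μu₁` there, while `u₁` is continuous
on `[0, η]`.
-/

open MeasureTheory Set Filter

lemma integrableOn_Ioc_of_continuousOn_Ici {u : ℝ → ℝ} {a : ℝ} (hu : ContinuousOn u (Ici a))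
    (b : ℝ) : IntegrableOn u (Ioc a b) :=
  (hu.mono Icc_subset_Ici_self).integrableOn_Icc.mono_set Ioc_subset_Icc_self

section GeneralMeasure

variable {α : Type*} [MeasurableSpace α] {ν : Measure α}

lemma Integrable.mul_of_nonneg_of_le {c v : α → ℝ} {M : ℝ} (hv : Integrable v ν)
    (hc : Measurable c) (hc0 : ∀ x, 0 ≤ c x) (hcM : ∀ x, c x ≤ M) : Integrable (fun x => c x * v x) ν :=
  hv.bdd_mul hc.aestronglyMeasurable <| ae_of_all _ fun x => by
    rw [Real.norm_eq_abs, abs_of_nonneg (hc0 x)]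
    exact hcM x

lemma integral_mul_le_of_balance {μ c1 c2 u1 u2 h1 h2 : α → ℝ} {a b : ℝ}
    (hh1 : Integrable h1 ν) (hh2 : Integrable h2 ν) (hμu1 : Integrable (fun y => μ y * u1 y) ν)
    (hc1u1 : Integrable (fun y => c1 y * u1 y) ν) (hc2u2 : Integrable (fun y => c2 y * u2 y) ν)
    (ha : 0 ≤ a) (hb : 0 ≤ b)
    (heq1 : a = ∫ y, (h1 y - (c1 y + μ y) * u1 y + c2 y * u2 y) ∂ν)
    (heq2 : b = ∫ y, (h2 y - c2 y * u2 y + c1 y * u1 y) ∂ν) :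
    ∫ y, μ y * u1 y ∂ν ≤ (∫ y, h1 y ∂ν) + ∫ y, h2 y ∂ν := by
  have hf : Integrable (fun y => h1 y - (c1 y + μ y) * u1 y + c2 y * u2 y) ν :=
    (((hh1.sub hc1u1).sub hμu1).add hc2u2).congr <| ae_of_all _ fun y => by
      simp only [Pi.add_apply, Pi.sub_apply]
      ring
  have hg : Integrable (fun y => h2 y - c2 y * u2 y + c1 y * u1 y) ν := (hh2.sub hc2u2).add hc1u1
  have hsum : a + b = (∫ y, h1 y ∂ν) + (∫ y, h2 y ∂ν) - ∫ y, μ y * u1 y ∂ν := by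
    rw [heq1, heq2, ← integral_add hf hg, ← integral_add hh1 hh2,
      ← integral_sub (f := fun y => h1 y + h2 y) (hh1.add hh2) hμu1]
    congr 1
    funext y
    ring
  linarith

lemma setIntegral_le_integral_abs_of_subset {h : α → ℝ} {S T : Set α} (hST : S ⊆ T)
    (hh : IntegrableOn h T ν) : ∫ x in S, h x ∂ν ≤ ∫ x in T, |h x| ∂ν :=
  calc ∫ x in S, h x ∂ν ≤ ∫ x in S, |h x| ∂ν :=
        integral_mono (hh.mono_set hST) (hh.mono_set hST).abs fun x => le_abs_self (h x)
    _ ≤ ∫ x in T, |h x| ∂ν :=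
        setIntegral_mono_set hh.abs (ae_of_all _ fun x => abs_nonneg (h x)) hST.eventuallyLE

end GeneralMeasure

section HalfLine

variable {f : ℝ → ℝ} {a C : ℝ}

lemma integrableOn_Ioi_of_setIntegral_Ioc_le (hf : ∀ b, IntegrableOn f (Ioc a b))
    (hf0 : ∀ x, 0 ≤ f x) (hC : ∀ b, a ≤ b → ∫ x in Ioc a b, f x ≤ C) :
    IntegrableOn f (Ioi a) :=
  integrableOn_Ioi_of_intervalIntegral_norm_bounded C a hf tendsto_id <|
    eventually_ge_atTop a |>.mono fun b hb => by
      simpa only [id, intervalIntegral.integral_of_le hb, Real.norm_eq_abs, abs_of_nonneg (hf0 _)]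
        using hC b hb

lemma setIntegral_Ioi_le_of_setIntegral_Ioc_le (hf : IntegrableOn f (Ioi a))
    (hC : ∀ b, a ≤ b → ∫ x in Ioc a b, f x ≤ C) : ∫ x in Ioi a, f x ≤ C :=
  le_of_tendsto (intervalIntegral_tendsto_integral_Ioi a hf tendsto_id) <|
    eventually_ge_atTop a |>.mono fun b hb => by
      simpa only [id, intervalIntegral.integral_of_le hb] using hC b hb

lemma integrableOn_Ioi_of_liminf_pos_of_integrableOn_mul {μ u : ℝ → ℝ}
    (hμ0 : ∀ x, 0 ≤ μ x) (hμ : 0 < liminf μ atTop) (hu : ContinuousOn u (Ici a))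
    (hu0 : ∀ x, 0 ≤ u x) (hμu : IntegrableOn (fun x => μ x * u x) (Ioi a)) :
    IntegrableOn u (Ioi a) := by
  set ε := liminf μ atTop / 2
  have hε : 0 < ε := half_pos hμ
  obtain ⟨η, hη⟩ := eventually_atTop.1 <|
    eventually_lt_of_lt_liminf (half_lt_self hμ) (isBoundedUnder_of ⟨0, hμ0⟩)
  have hbound : ∀ x, η ≤ x → u x ≤ ε⁻¹ * (μ x * u x) := fun x hx => by
    rw [le_inv_mul_iff₀ hε]
    exact mul_le_mul_of_nonneg_right (hη x hx).le (hu0 x)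
  have htail : IntegrableOn u (Ioi (max a η)) := by
    refine Integrable.mono' ((hμu.mono_set (Ioi_subset_Ioi (le_max_left a η))).const_mul ε⁻¹)
      ((hu.mono fun x hx => (le_max_left a η).trans (le_of_lt hx)).aestronglyMeasurable
        measurableSet_Ioi) ((ae_restrict_iff' measurableSet_Ioi).2 (ae_of_all _ fun x hx => ?_))
    rw [Real.norm_eq_abs, abs_of_nonneg (hu0 x)]
    exact hbound x ((le_max_right a η).trans hx.le)
  rw [← Ioc_union_Ioi_eq_Ioi (le_max_left a η)]
  exact (integrableOn_Ioc_of_continuousOn_Ici hu _).union htail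

end HalfLine

theorem stmt17_general (γ0 : ℝ) (hγ0 : 0 < γ0)
    (γ1 γ2 μ c1 c2 u1 u2 h1 h2 : ℝ → ℝ)
    (hγ1lb : ∀ s ∈ Set.Ici (0 : ℝ), γ0 ≤ γ1 s)
    (hγ2lb : ∀ s ∈ Set.Ici (0 : ℝ), γ0 ≤ γ2 s)
    (hμmeas : Measurable μ) (hμnonneg : ∀ x, 0 ≤ μ x) (hμbdd : ∃ M, ∀ x, μ x ≤ M)
    (hc1meas : Measurable c1) (hc1nonneg : ∀ x, 0 ≤ c1 x) (hc1bdd : ∃ M, ∀ x, c1 x ≤ M)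
    (hc2meas : Measurable c2) (hc2nonneg : ∀ x, 0 ≤ c2 x) (hc2bdd : ∃ M, ∀ x, c2 x ≤ M)
    (hu1cont : ContinuousOn u1 (Set.Ici 0)) (hu2cont : ContinuousOn u2 (Set.Ici 0))
    (hu1nonneg : ∀ s, 0 ≤ u1 s) (hu2nonneg : ∀ s, 0 ≤ u2 s)
    (hh1 : IntegrableOn h1 (Set.Ioi 0)) (hh2 : IntegrableOn h2 (Set.Ioi 0))
    (heq1 : ∀ s ∈ Set.Ici (0 : ℝ), γ1 s * u1 s =
      ∫ y in Set.Ioc 0 s, (h1 y - (c1 y + μ y) * u1 y + c2 y * u2 y))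
    (heq2 : ∀ s ∈ Set.Ici (0 : ℝ), γ2 s * u2 s =
      ∫ y in Set.Ioc 0 s, (h2 y - c2 y * u2 y + c1 y * u1 y)) :
    (∫⁻ s in Set.Ioi 0, ENNReal.ofReal (μ s * u1 s)
      ≤ ENNReal.ofReal ((∫ s in Set.Ioi 0, |h1 s|) + ∫ s in Set.Ioi 0, |h2 s|)) ∧
    (0 < Filter.liminf μ Filter.atTop → IntegrableOn u1 (Set.Ioi 0)) := by
  obtain ⟨Mμ, hMμ⟩ := hμbdd
  obtain ⟨M1, hM1⟩ := hc1bdd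
  obtain ⟨M2, hM2⟩ := hc2bdd
  have hu1 := integrableOn_Ioc_of_continuousOn_Ici hu1cont
  have hu2 := integrableOn_Ioc_of_continuousOn_Ici hu2cont
  have hμu1 s : IntegrableOn (fun y => μ y * u1 y) (Ioc 0 s) :=
    Integrable.mul_of_nonneg_of_le (hu1 s) hμmeas hμnonneg hMμ
  have hμu1_nonneg x : 0 ≤ μ x * u1 x := mul_nonneg (hμnonneg x) (hu1nonneg x)
  have hbound s (hs : 0 ≤ s) :
      ∫ y in Ioc 0 s, μ y * u1 y ≤ (∫ s in Ioi 0, |h1 s|) + ∫ s in Ioi 0, |h2 s| :=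
    calc ∫ y in Ioc 0 s, μ y * u1 y ≤ (∫ y in Ioc 0 s, h1 y) + ∫ y in Ioc 0 s, h2 y :=
          integral_mul_le_of_balance (hh1.mono_set Ioc_subset_Ioi_self)
            (hh2.mono_set Ioc_subset_Ioi_self) (hμu1 s)
            (Integrable.mul_of_nonneg_of_le (hu1 s) hc1meas hc1nonneg hM1)
            (Integrable.mul_of_nonneg_of_le (hu2 s) hc2meas hc2nonneg hM2)
            (mul_nonneg (hγ0.le.trans (hγ1lb s hs)) (hu1nonneg s))
            (mul_nonneg (hγ0.le.trans (hγ2lb s hs)) (hu2nonneg s)) (heq1 s hs) (heq2 s hs)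
      _ ≤ _ := add_le_add (setIntegral_le_integral_abs_of_subset Ioc_subset_Ioi_self hh1)
          (setIntegral_le_integral_abs_of_subset Ioc_subset_Ioi_self hh2)
  have hint := integrableOn_Ioi_of_setIntegral_Ioc_le hμu1 hμu1_nonneg hbound
  refine ⟨?_, fun hlim => ?_⟩
  · rw [← ofReal_integral_eq_lintegral_ofReal hint (ae_of_all _ hμu1_nonneg)]
    exact ENNReal.ofReal_le_ofReal (setIntegral_Ioi_le_of_setIntegral_Ioc_le hint hbound)
  · exact integrableOn_Ioi_of_liminf_pos_of_integrableOn_mul hμnonneg hlim hu1cont hu1nonneg hint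

/-- For the coupled system at `λ = 0`: `(γ₁u₁)' + (c₁+μ)u₁ - c₂u₂ = h₁`,
`(γ₂u₂)' + c₂u₂ - c₁u₁ = h₂` with `u₁,u₂ ≥ 0`, `u₁(0)=u₂(0)=0` (integrated form),
one has `∫₀^∞ μ u₁ ≤ ‖h₁‖_{L¹} + ‖h₂‖_{L¹}`; if moreover `liminf_{x→∞} μ(x) > 0`
then `u₁ ∈ L¹(0,∞)`. -/
theorem stmt17 (γ0 : ℝ) (hγ0 : 0 < γ0)
    (γ1 γ2 μ c1 c2 u1 u2 h1 h2 : ℝ → ℝ)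
    (hγ1lip : ∃ L : NNReal, LipschitzWith L γ1)
    (hγ2lip : ∃ L : NNReal, LipschitzWith L γ2)
    (hγ1lb : ∀ s ∈ Set.Ici (0 : ℝ), γ0 ≤ γ1 s)
    (hγ2lb : ∀ s ∈ Set.Ici (0 : ℝ), γ0 ≤ γ2 s)
    (hμmeas : Measurable μ) (hμnonneg : ∀ x, 0 ≤ μ x) (hμbdd : ∃ M, ∀ x, μ x ≤ M)
    (hc1meas : Measurable c1) (hc1nonneg : ∀ x, 0 ≤ c1 x) (hc1bdd : ∃ M, ∀ x, c1 x ≤ M)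
    (hc2meas : Measurable c2) (hc2nonneg : ∀ x, 0 ≤ c2 x) (hc2bdd : ∃ M, ∀ x, c2 x ≤ M)
    (hu1cont : ContinuousOn u1 (Set.Ici 0)) (hu2cont : ContinuousOn u2 (Set.Ici 0))
    (hu1nonneg : ∀ s, 0 ≤ u1 s) (hu2nonneg : ∀ s, 0 ≤ u2 s)
    (hh1 : IntegrableOn h1 (Set.Ioi 0)) (hh2 : IntegrableOn h2 (Set.Ioi 0))
    (hh1nonneg : ∀ s, 0 ≤ h1 s) (hh2nonneg : ∀ s, 0 ≤ h2 s)
    (heq1 : ∀ s ∈ Set.Ici (0 : ℝ), γ1 s * u1 s =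
      ∫ y in Set.Ioc 0 s, (h1 y - (c1 y + μ y) * u1 y + c2 y * u2 y))
    (heq2 : ∀ s ∈ Set.Ici (0 : ℝ), γ2 s * u2 s =
      ∫ y in Set.Ioc 0 s, (h2 y - c2 y * u2 y + c1 y * u1 y)) :
    (∫⁻ s in Set.Ioi 0, ENNReal.ofReal (μ s * u1 s)
      ≤ ENNReal.ofReal ((∫ s in Set.Ioi 0, |h1 s|) + ∫ s in Set.Ioi 0, |h2 s|)) ∧
    (0 < Filter.liminf μ Filter.atTop → IntegrableOn u1 (Set.Ioi 0)) :=
  stmt17_general γ0 hγ0 γ1 γ2 μ c1 c2 u1 u2 h1 h2 hγ1lb hγ2lb hμmeas hμnonneg hμbdd hc1meas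
    hc1nonneg hc1bdd hc2meas hc2nonneg hc2bdd hu1cont hu2cont hu1nonneg hu2nonneg hh1 hh2 heq1 heq2
end
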